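/- arXiv:2405.20645 — 8 statements merged into one kernel-verified Lean document; each statement's English description precedes it below -/
import Mathlib

section
/- If I is a monomial ideal with the non-pure dual exchange property and m = (x_1,...,x_n) is the graded maximal ideal of S, then the ideal mI also satisfies the non-pure dual exchange property. -/
open MvPolynomial

/-- Total degree of an exponent vector. -/
def expDeg {n : ℕ} (m : Fin n →₀ ℕ) : ℕ := m.sum fun _ e => e

/-- A monomial ideal: an ideal generated by a set of monomials. -/
def IsMonomialIdeal {n : ℕ} {K : Type*} [Field K]
    (I : Ideal (MvPolynomial (Fin n) K)) : Prop :=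
  ∃ A : Set (Fin n →₀ ℕ), I = Ideal.span ((fun m => (monomial m (1 : K))) '' A)

/-- `m` is (the exponent vector of) a minimal monomial generator of `I`. -/
def MinGen {n : ℕ} {K : Type*} [Field K]
    (I : Ideal (MvPolynomial (Fin n) K)) (m : Fin n →₀ ℕ) : Prop :=
  (monomial m (1 : K)) ∈ I ∧
    ∀ m' : Fin n →₀ ℕ, m' ≤ m → m' ≠ m → (monomial m' (1 : K)) ∉ I

/-- The non-pure dual exchange property. -/
def NPDE {n : ℕ} {K : Type*} [Field K]
    (I : Ideal (MvPolynomial (Fin n) K)) : Prop :=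
  ∀ u v : Fin n →₀ ℕ, MinGen I u → MinGen I v → expDeg u ≤ expDeg v →
    ∀ i : Fin n, v i < u i →
      ∃ j : Fin n, u j < v j ∧
        (monomial (v + Finsupp.single i 1 - Finsupp.single j 1) (1 : K)) ∈ I

/-- `I` has linear quotients. -/
def HasLinearQuotients {n : ℕ} {K : Type*} [Field K]
    (I : Ideal (MvPolynomial (Fin n) K)) : Prop :=
  ∃ l : List (Fin n →₀ ℕ), l.Nodup ∧ (∀ m, MinGen I m ↔ m ∈ l) ∧
    ∀ k : Fin l.length, 0 < (k : ℕ) →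
      ∃ V : Set (Fin n),
        Submodule.colon
          (Ideal.span ((fun m => (monomial m (1 : K))) '' {m | m ∈ l.take k}))
          (Ideal.span {monomial (l.get k) (1 : K)})
        = Ideal.span ((fun i => (X i : MvPolynomial (Fin n) K)) '' V)

/-- The monomial prime ideal generated by the variables with index in `J`. -/
noncomputable def mIdeal {n : ℕ} (K : Type*) [Field K] (J : Set (Fin n)) :
    Ideal (MvPolynomial (Fin n) K) :=
  Ideal.span ((fun i => (X i : MvPolynomial (Fin n) K)) '' J)

/-- `I` is weakly polymatroidal with respect to the variable order
`x_{σ 0} > x_{σ 1} > ⋯`. -/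
def WeaklyPolymatroidal {n : ℕ} {K : Type*} [Field K]
    (I : Ideal (MvPolynomial (Fin n) K)) (σ : Equiv.Perm (Fin n)) : Prop :=
  ∀ u v : Fin n →₀ ℕ, MinGen I u → MinGen I v →
    ∀ t : Fin n, (∀ k : Fin n, k < t → u (σ k) = v (σ k)) → v (σ t) < u (σ t) →
      ∃ j : Fin n, t < j ∧ 0 < v (σ j) ∧
        (monomial (v + Finsupp.single (σ t) 1 - Finsupp.single (σ j) 1) (1 : K)) ∈ I

/-- `I` has a `d`-linear (finite free graded) resolution. -/
def HasLinearResolution {n : ℕ} {K : Type*} [Field K]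
    (I : Ideal (MvPolynomial (Fin n) K)) (d : ℕ) : Prop :=
  ∃ (b : ℕ → ℕ) (g : Fin (b 0) → MvPolynomial (Fin n) K)
    (M : ∀ k : ℕ, Matrix (Fin (b k)) (Fin (b (k + 1))) (MvPolynomial (Fin n) K)),
    (∀ i, (g i).IsHomogeneous d) ∧
    Ideal.span (Set.range g) = I ∧
    (∀ k i j, ((M k) i j).IsHomogeneous 1) ∧
    LinearMap.ker (Fintype.linearCombination (MvPolynomial (Fin n) K) g)
      = LinearMap.range (M 0).mulVecLin ∧
    ∀ k, LinearMap.ker (M k).mulVecLin = LinearMap.range (M (k + 1)).mulVecLin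

/-- The ideal generated by the degree-`d` homogeneous elements of `I`. -/
noncomputable def componentIdeal {n : ℕ} {K : Type*} [Field K]
    (I : Ideal (MvPolynomial (Fin n) K)) (d : ℕ) :
    Ideal (MvPolynomial (Fin n) K) :=
  Ideal.span {f | f ∈ I ∧ f.IsHomogeneous d}

/-- `I` is componentwise linear. -/
def ComponentwiseLinear {n : ℕ} {K : Type*} [Field K]
    (I : Ideal (MvPolynomial (Fin n) K)) : Prop :=
  ∀ d : ℕ, HasLinearResolution (componentIdeal I d) d

/-! Every minimal generator of `𝔪I` is `x_k u'` with `u'` a minimal generator of `I`. Let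
`u = x_k u'` and `v = x_l v'` be minimal generators of `𝔪I` with `deg u ≤ deg v` and `v_i < u_i`.
If `v / x_k ∈ I`, write `v = x_k v''` and exchange `u'` and `v''` at `i` inside `I`; the common
factor `x_k` does not disturb the comparison `u_j < v_j`. If `u_l < v_l`, then `j = l` works, as
`x_i v / x_l = x_i v' ∈ 𝔪I`. Otherwise `v'_l < u'_l`, and exchanging `u'` and `v'` at `l` gives
`j` with `x_l v' / x_j ∈ I`; here `j ≠ k` because `v / x_k ∉ I`, so `u_j = u'_j < v'_j ≤ v_j`. -/

section

variable {n : ℕ} {K : Type*} [Field K] {I : Ideal (MvPolynomial (Fin n) K)}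

lemma expDeg_add_single (a : Fin n →₀ ℕ) (t : Fin n) :
    expDeg (a + Finsupp.single t 1) = expDeg a + 1 := by
  change Finsupp.degree _ = Finsupp.degree _ + 1
  rw [map_add, Finsupp.degree_single]

lemma monomial_add_single_mem_span_X_mul {b : Fin n →₀ ℕ} (hb : monomial b (1 : K) ∈ I)
    (t : Fin n) : monomial (b + Finsupp.single t 1) (1 : K) ∈ Ideal.span (Set.range X) * I := by
  rw [add_comm, ← mul_one (1 : K), ← monomial_mul]
  exact Ideal.mul_mem_mul (Ideal.subset_span ⟨t, rfl⟩) hb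

lemma span_X_mul_span_monomial (A : Set (Fin n →₀ ℕ)) :
    Ideal.span (Set.range X) * Ideal.span ((fun m => monomial m (1 : K)) '' A) =
      Ideal.span ((fun m => monomial m (1 : K)) ''
        Set.image2 (fun a t => a + Finsupp.single t 1) A Set.univ) := by
  have hX : Set.range (X : Fin n → MvPolynomial (Fin n) K) =
      (fun m => monomial m (1 : K)) '' Set.range fun t => Finsupp.single t 1 := by
    rw [← Set.range_comp]; rfl
  rw [hX, Ideal.span_mul_span', ← Set.image2_mul, Set.image2_image_left, Set.image2_image_right,
    Set.image_image2, Set.image2_swap, ← Set.image_univ, Set.image2_image_right]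
  simp only [monomial_mul, mul_one, add_comm]

lemma monomial_mem_span_X_mul_iff (hI : IsMonomialIdeal I) {w : Fin n →₀ ℕ} :
    monomial w (1 : K) ∈ Ideal.span (Set.range X) * I ↔
      ∃ b t, monomial b (1 : K) ∈ I ∧ b + Finsupp.single t 1 ≤ w := by
  refine ⟨fun hw => ?_, fun ⟨b, t, hb, hbw⟩ => ?_⟩
  · obtain ⟨A, rfl⟩ := hI
    rw [span_X_mul_span_monomial, mem_ideal_span_monomial_image] at hw
    obtain ⟨-, ⟨a, ha, t, -, rfl⟩, haw⟩ := hw w (by simp)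
    exact ⟨a, t, Ideal.subset_span ⟨a, ha, rfl⟩, haw⟩
  · obtain ⟨c, rfl⟩ := exists_add_of_le hbw
    rw [← mul_one (1 : K), ← monomial_mul]
    exact Ideal.mul_mem_right _ _ (monomial_add_single_mem_span_X_mul hb t)

lemma MinGen.of_add_single {p : Fin n →₀ ℕ} {t : Fin n}
    (hpt : MinGen (Ideal.span (Set.range X) * I) (p + Finsupp.single t 1))
    (hp : monomial p (1 : K) ∈ I) : MinGen I p :=
  ⟨hp, fun b hbp hne hb => hpt.2 _ (add_le_add_left hbp _) (by simpa using hne)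
    (monomial_add_single_mem_span_X_mul hb t)⟩

lemma MinGen.exists_eq_add_single (hI : IsMonomialIdeal I) {u : Fin n →₀ ℕ}
    (hu : MinGen (Ideal.span (Set.range X) * I) u) :
    ∃ u' t, MinGen I u' ∧ u = u' + Finsupp.single t 1 := by
  obtain ⟨b, t, hb, hbu⟩ := (monomial_mem_span_X_mul_iff hI).1 hu.1
  have hbu : b + Finsupp.single t 1 = u := by
    by_contra hne
    exact hu.2 _ hbu hne (monomial_add_single_mem_span_X_mul hb t)
  subst hbu
  exact ⟨b, t, hu.of_add_single hb, rfl⟩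

lemma exists_exchange_of_common_single (h : NPDE I) {u v : Fin n →₀ ℕ}
    (hu : MinGen I u) (hv : MinGen I v) (hdeg : expDeg u ≤ expDeg v) (k : Fin n) {i : Fin n}
    (hi : (v + Finsupp.single k 1 : Fin n →₀ ℕ) i <
      (u + Finsupp.single k 1 : Fin n →₀ ℕ) i) :
    ∃ j, (u + Finsupp.single k 1 : Fin n →₀ ℕ) j <
      (v + Finsupp.single k 1 : Fin n →₀ ℕ) j ∧
      monomial (v + Finsupp.single k 1 + Finsupp.single i 1 - Finsupp.single j 1) (1 : K) ∈
        Ideal.span (Set.range X) * I := by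
  simp only [Finsupp.add_apply] at hi
  obtain ⟨j, hj, hw⟩ := h u v hu hv hdeg i (by omega)
  refine ⟨j, by simp only [Finsupp.add_apply]; omega, ?_⟩
  have hjv : Finsupp.single j 1 ≤ v + Finsupp.single i 1 :=
    Finsupp.single_le_iff.2 (by simp only [Finsupp.add_apply]; omega)
  rw [add_right_comm, ← tsub_add_eq_add_tsub hjv]
  exact monomial_add_single_mem_span_X_mul hw k

lemma exists_exchange_of_forall_ne_add_single (h : NPDE I) {u v : Fin n →₀ ℕ}
    (hu : MinGen I u) (hv : MinGen I v) (hdeg : expDeg u ≤ expDeg v) {k l : Fin n}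
    (hk : ∀ w, monomial w (1 : K) ∈ I → v + Finsupp.single l 1 ≠ w + Finsupp.single k 1)
    (hl : (v + Finsupp.single l 1 : Fin n →₀ ℕ) l ≤
      (u + Finsupp.single k 1 : Fin n →₀ ℕ) l) (i : Fin n) :
    ∃ j, (u + Finsupp.single k 1 : Fin n →₀ ℕ) j <
      (v + Finsupp.single l 1 : Fin n →₀ ℕ) j ∧
      monomial (v + Finsupp.single l 1 + Finsupp.single i 1 - Finsupp.single j 1) (1 : K) ∈
        Ideal.span (Set.range X) * I := by
  have hlk : l ≠ k := by rintro rfl; exact hk v hv.1 rfl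
  have hvl : v l < u l := by simpa [Finsupp.single_apply, hlk, Ne.symm hlk] using hl
  obtain ⟨j, hj, hw⟩ := h u v hu hv hdeg l hvl
  have hjv : Finsupp.single j 1 ≤ v + Finsupp.single l 1 :=
    Finsupp.single_le_iff.2 (by simp only [Finsupp.add_apply]; omega)
  have hjk : j ≠ k := by
    rintro rfl
    exact hk _ hw (tsub_add_cancel_of_le hjv).symm
  refine ⟨j, ?_, ?_⟩
  · simp only [Finsupp.add_apply, Finsupp.single_apply, if_neg (Ne.symm hjk)]
    omega
  · rw [← tsub_add_eq_add_tsub hjv]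
    exact monomial_add_single_mem_span_X_mul hw i

end

theorem stmt2 {n : ℕ} {K : Type*} [Field K] (I : Ideal (MvPolynomial (Fin n) K))
    (hmon : IsMonomialIdeal I) (h : NPDE I) :
    NPDE (Ideal.span (Set.range (X : Fin n → MvPolynomial (Fin n) K)) * I) := by
  intro u v hu hv hdeg i hi
  obtain ⟨u, k, hu', rfl⟩ := hu.exists_eq_add_single hmon
  obtain ⟨v, l, hv', rfl⟩ := hv.exists_eq_add_single hmon
  by_cases hk : ∃ w, monomial w (1 : K) ∈ I ∧ v + Finsupp.single l 1 = w + Finsupp.single k 1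
  · obtain ⟨w, hw, hvw⟩ := hk
    rw [hvw] at hv hi hdeg ⊢
    rw [expDeg_add_single, expDeg_add_single, add_le_add_iff_right] at hdeg
    exact exists_exchange_of_common_single h hu' (hv.of_add_single hw) hdeg k hi
  simp only [not_exists, not_and] at hk
  by_cases hl :
      (u + Finsupp.single k 1 : Fin n →₀ ℕ) l < (v + Finsupp.single l 1 : Fin n →₀ ℕ) l
  · refine ⟨l, hl, ?_⟩
    rw [add_right_comm, add_tsub_cancel_right]
    exact monomial_add_single_mem_span_X_mul hv'.1 i
  rw [expDeg_add_single, expDeg_add_single, add_le_add_iff_right] at hdeg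
  exact exists_exchange_of_forall_ne_add_single h hu' hv' hdeg hk (not_lt.1 hl) i
end

section
/- The ideal I = (x_1^2, x_1x_2^2, x_1x_2x_3, x_2^2x_3, x_1x_3^3, x_2x_3^3) in K[x_1,x_2,x_3] satisfies the non-pure dual exchange property, but its square I^2 does not: for u = x_1^3x_3^3 ∈ G(I^2) and v = x_2^4x_3^2 ∈ G(I^2), one has deg_{x_3}(v) < deg_{x_3}(u) and x_3(v/x_2) = x_2^3x_3^3 ∉ I^2. -/
open MvPolynomial

/-!
Every ideal in sight is spanned by monomials, so membership of a monomial means divisibility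
by a generator, the minimal generators are the minimal exponent vectors, and the square of the
ideal is spanned by the pairwise sums of exponent vectors. Each claim thereby becomes a finite
statement about six exponent vectors in `ℕ³` and their sums, which is decided by computation.
-/

open Pointwise

instance Pi.decidableLEOfFintype {ι α : Type*} [Fintype ι] [LE α] [DecidableLE α] :
    DecidableLE (ι → α) :=
  fun f g => decidable_of_iff (∀ i, f i ≤ g i) Iff.rfl

theorem expDeg_eq_sum {n : ℕ} (m : Fin n →₀ ℕ) : expDeg m = ∑ k, m k :=
  Finsupp.sum_fintype _ _ fun _ => rfl

theorem MvPolynomial.monomial_equivFunOnFinite_symm {σ R : Type*} [Fintype σ] [CommSemiring R]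
    (s : σ → ℕ) : monomial (Finsupp.equivFunOnFinite.symm s) (1 : R) = ∏ i, X i ^ s i := by
  rw [monomial_eq, C_1, one_mul, Finsupp.prod_fintype _ _ fun _ => pow_zero _]
  rfl

/-- Exponent vectors are plain functions `Fin n → ℕ` rather than finsupps, so that concrete
sets of them can be decided by computation. -/
noncomputable def monomialSpan {n : ℕ} (K : Type*) [Field K] (S : Set (Fin n → ℕ)) :
    Ideal (MvPolynomial (Fin n) K) :=
  Ideal.span ((fun s => monomial (Finsupp.equivFunOnFinite.symm s) (1 : K)) '' S)

section MonomialSpan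

variable {n : ℕ} {K : Type*} [Field K] {S T : Set (Fin n → ℕ)}

theorem monomial_mem_monomialSpan_iff {m : Fin n →₀ ℕ} :
    monomial m (1 : K) ∈ monomialSpan K S ↔ ∃ s ∈ S, s ≤ ⇑m := by
  classical
  rw [monomialSpan, ← Set.image_image (fun m => monomial m (1 : K)),
    mem_ideal_span_monomial_image, support_monomial, if_neg one_ne_zero]
  simp only [Finset.mem_singleton, forall_eq, Set.exists_mem_image]
  rfl

theorem monomialSpan_mul : monomialSpan K S * monomialSpan K T = monomialSpan K (S + T) := by
  rw [monomialSpan, monomialSpan, monomialSpan, Ideal.span_mul_span', ← Set.image2_mul,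
    ← Set.image2_add, Set.image_image2_distrib]
  intro s t
  rw [monomial_mul, one_mul]
  exact congrArg (monomial · 1) (map_add Finsupp.addEquivFunOnFinite.symm s t)

theorem minGen_monomialSpan_iff {m : Fin n →₀ ℕ} :
    MinGen (monomialSpan K S) m ↔ Minimal (· ∈ S) ⇑m := by
  simp only [MinGen, monomial_mem_monomialSpan_iff, minimal_iff]
  constructor
  · rintro ⟨⟨s, hs, hsm⟩, hmin⟩
    have eq_of_le : ∀ y ∈ S, y ≤ ⇑m → y = ⇑m := fun y hy hym => by_contra fun hne =>
      hmin (Finsupp.equivFunOnFinite.symm y) hym (fun h => hne (congrArg DFunLike.coe h))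
        ⟨y, hy, le_rfl⟩
    exact ⟨eq_of_le s hs hsm ▸ hs, fun y hy hym => (eq_of_le y hy hym).symm⟩
  · rintro ⟨hm, hmin⟩
    refine ⟨⟨m, hm, le_rfl⟩, fun m' hle hne ⟨s, hs, hsm'⟩ => hne (le_antisymm hle ?_)⟩
    exact (hmin hs (hsm'.trans hle) ▸ hsm' : ⇑m ≤ ⇑m')

theorem nPDE_monomialSpan_of_exchange
    (h : ∀ u ∈ S, ∀ v ∈ S, ∑ k, u k ≤ ∑ k, v k → ∀ i, v i < u i →
      ∃ j, u j < v j ∧ ∃ b ∈ S, b ≤ v + Pi.single i 1 - Pi.single j 1) :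
    NPDE (monomialSpan K S) := by
  intro u v hu hv hdeg i hi
  rw [minGen_monomialSpan_iff] at hu hv
  rw [expDeg_eq_sum, expDeg_eq_sum] at hdeg
  obtain ⟨j, hj, b, hb, hbv⟩ := h _ hu.prop _ hv.prop hdeg i hi
  refine ⟨j, hj, monomial_mem_monomialSpan_iff.2 ⟨b, hb, ?_⟩⟩
  rwa [Finsupp.coe_tsub, Finsupp.coe_add, Finsupp.single_eq_pi_single,
    Finsupp.single_eq_pi_single]

end MonomialSpan

def gens : Finset (Fin 3 → ℕ) :=
  {![2, 0, 0], ![1, 2, 0], ![1, 1, 1], ![0, 2, 1], ![1, 0, 3], ![0, 1, 3]}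

theorem span_eq_monomialSpan_gens (K : Type*) [Field K] :
    (Ideal.span {X 0 ^ 2, X 0 * X 1 ^ 2, X 0 * X 1 * X 2, X 1 ^ 2 * X 2, X 0 * X 2 ^ 3,
      X 1 * X 2 ^ 3} : Ideal (MvPolynomial (Fin 3) K)) =
      monomialSpan K (gens : Set (Fin 3 → ℕ)) := by
  rw [monomialSpan]
  congr 1
  simp [gens, monomial_equivFunOnFinite_symm, Fin.prod_univ_three, Set.image_insert_eq]

theorem nPDE_monomialSpan_gens (K : Type*) [Field K] :
    NPDE (monomialSpan K (gens : Set (Fin 3 → ℕ))) :=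
  nPDE_monomialSpan_of_exchange (by simp only [Finset.mem_coe]; decide)

theorem stmt3 (K : Type*) [Field K] :
    let I : Ideal (MvPolynomial (Fin 3) K) := Ideal.span
      {X 0 ^ 2, X 0 * X 1 ^ 2, X 0 * X 1 * X 2, X 1 ^ 2 * X 2, X 0 * X 2 ^ 3, X 1 * X 2 ^ 3}
    NPDE I ∧
    MinGen (I ^ 2) (Finsupp.single 0 3 + Finsupp.single 2 3) ∧
    MinGen (I ^ 2) (Finsupp.single 1 4 + Finsupp.single 2 2) ∧
    ((Finsupp.single 1 4 + Finsupp.single 2 2 : Fin 3 →₀ ℕ) 2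
      < (Finsupp.single 0 3 + Finsupp.single 2 3 : Fin 3 →₀ ℕ) 2) ∧
    (X 1 ^ 3 * X 2 ^ 3 : MvPolynomial (Fin 3) K) ∉ I ^ 2 ∧
    ¬ NPDE (I ^ 2) := by
  intro I
  set u : Fin 3 →₀ ℕ := Finsupp.single 0 3 + Finsupp.single 2 3
  set v : Fin 3 →₀ ℕ := Finsupp.single 1 4 + Finsupp.single 2 2
  have hI : I = monomialSpan K ↑gens := span_eq_monomialSpan_gens K
  have hI2 : I ^ 2 = monomialSpan K ↑(gens + gens) := by
    rw [hI, sq, monomialSpan_mul, Finset.coe_add]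
  have minGen_sq (m : Fin 3 →₀ ℕ) (hm : Minimal (· ∈ gens + gens) ⇑m) :
      MinGen (I ^ 2) m :=
    hI2 ▸ minGen_monomialSpan_iff.2 hm
  have hu : ⇑u = ![3, 0, 3] := by ext k; fin_cases k <;> simp [u]
  have hv : ⇑v = ![0, 4, 2] := by ext k; fin_cases k <;> simp [v]
  have hu_minGen : MinGen (I ^ 2) u := minGen_sq u (by rw [hu, minimal_iff]; decide)
  have hv_minGen : MinGen (I ^ 2) v := minGen_sq v (by rw [hv, minimal_iff]; decide)
  have hw : ⇑(v + Finsupp.single 2 1 - Finsupp.single 1 1 : Fin 3 →₀ ℕ) = ![0, 3, 3] := by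
    ext k; fin_cases k <;> simp [v]
  have hw_monomial : (X 1 ^ 3 * X 2 ^ 3 : MvPolynomial (Fin 3) K) =
      monomial (v + Finsupp.single 2 1 - Finsupp.single 1 1) 1 := by
    rw [← Finsupp.equivFunOnFinite_symm_coe (v + _ - _), hw, monomial_equivFunOnFinite_symm,
      Fin.prod_univ_three]
    simp
  have hw_not_mem : (X 1 ^ 3 * X 2 ^ 3 : MvPolynomial (Fin 3) K) ∉ I ^ 2 := by
    rw [hw_monomial, hI2, monomial_mem_monomialSpan_iff, hw]
    simp only [Finset.mem_coe]
    decide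
  refine ⟨hI ▸ nPDE_monomialSpan_gens K, hu_minGen, hv_minGen,
    by simp [u, v], hw_not_mem, fun h => ?_⟩
  obtain ⟨j, hj, hmem⟩ := h u v hu_minGen hv_minGen
    (by simp [expDeg_eq_sum, hu, hv, Fin.sum_univ_three]) 2 (by simp [hu, hv])
  obtain rfl : j = 1 := by fin_cases j <;> simp_all
  exact hw_not_mem (hw_monomial ▸ hmem)
end

section
/- Let J_1,...,J_s, K ⊆ [n] be nonempty sets such that J_i ∩ J_j = ∩_{t=1}^s J_t for all 1 ≤ i < j ≤ s, and K ∩ J_t = ∅ for all t. Then for any positive integers a_1,...,a_s, b, the monomial ideal I = m_{J_1}^{a_1} ∩ m_{J_2}^{a_2} ∩ ... ∩ m_{J_s}^{a_s} ∩ m_K^b in K[x_1,...,x_n] satisfies the non-pure dual exchange property. -/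
open MvPolynomial

/-!
A monomial `x^m` lies in the ideal iff `a t ≤ ∑_{k ∈ J t} m k` for all `t` and
`b ≤ ∑_{k ∈ K} m k`. Let `u`, `v` be minimal generators with `deg u ≤ deg v` and `v i < u i`.
Minimality of `u` makes some bound whose set contains `i` tight at `u`, and `v + e_i - e_j` meets
all bounds as soon as `v j > 0` and every bound tight at `v` whose set contains `j` also contains
`i`. If the bound tight at `u` is the one for `K`, or one for `J t` with `i` in the common core
`C = ⋂ J t`, then such a `j` with `u j < v j` is found inside that set. Otherwise `i ∈ J t \ C`.
If no `j` worked, every positive coordinate of `g = v - u` would lie in the union `W` of the sets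
of bounds tight at `v` that miss `i`. Comparing with `u` on `J t` gives `∑_C g > 0`, and since
the `J r` form a sunflower with core `C` this forces `∑_W g ≤ 0`; hence
`∑ g ≤ g i < 0`, contradicting `deg u ≤ deg v`.
-/

open Finset

theorem Finset.sum_le_single_of_nonpos {ι M : Type*} [AddCommMonoid M] [Preorder M]
    [AddLeftMono M] {s : Finset ι} {f : ι → M} {i : ι} (hi : i ∈ s)
    (hf : ∀ j ∈ s, j ≠ i → f j ≤ 0) : ∑ j ∈ s, f j ≤ f i :=
  (sum_le_sum_of_subset_of_nonpos' (singleton_subset_iff.2 hi) fun j hj hji =>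
    hf j hj (by simpa using hji)).trans_eq (sum_singleton f i)

theorem Finset.exists_lt_of_sum_le_of_lt {ι M : Type*} [AddCommMonoid M] [LinearOrder M]
    [IsOrderedCancelAddMonoid M] {s : Finset ι} {f g : ι → M} {i : ι}
    (h : ∑ j ∈ s, f j ≤ ∑ j ∈ s, g j) (hi : i ∈ s) (hgf : g i < f i) : ∃ j ∈ s, f j < g j := by
  by_contra! hc
  exact (sum_lt_sum hc ⟨i, hi, hgf⟩).not_ge h

theorem Finset.sum_biUnion_nonpos_of_sunflower {ι σ M : Type*} [DecidableEq σ]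
    [AddCommGroup M] [PartialOrder M] [IsOrderedAddMonoid M]
    {R : Finset ι} {P : ι → Finset σ} {C : Finset σ} {f : σ → M}
    (hC : ∀ r ∈ R, C ⊆ P r) (hPC : ∀ r ∈ R, ∀ r' ∈ R, r ≠ r' → P r ∩ P r' ⊆ C)
    (hP : ∀ r ∈ R, ∑ k ∈ P r, f k ≤ 0) (hCf : 0 ≤ ∑ k ∈ C, f k) :
    ∑ k ∈ R.biUnion P, f k ≤ 0 := by
  obtain rfl | ⟨r₀, hr₀⟩ := R.eq_empty_or_nonempty
  · simp
  have hunion : R.biUnion P = C ∪ R.biUnion fun r => P r \ C := by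
    ext k
    simp only [mem_biUnion, mem_union, mem_sdiff]
    constructor
    · rintro ⟨r, hr, hk⟩
      by_cases hkC : k ∈ C
      exacts [Or.inl hkC, Or.inr ⟨r, hr, hk, hkC⟩]
    · rintro (hk | ⟨r, hr, hk, -⟩)
      exacts [⟨r₀, hr₀, hC r₀ hr₀ hk⟩, ⟨r, hr, hk⟩]
  have hpetals : (R : Set ι).PairwiseDisjoint fun r => P r \ C := fun r hr r' hr' hne =>
    disjoint_left.2 fun k hk hk' => (mem_sdiff.1 hk).2 <|
      hPC r hr r' hr' hne (mem_inter.2 ⟨(mem_sdiff.1 hk).1, (mem_sdiff.1 hk').1⟩)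
  have hcore : Disjoint C (R.biUnion fun r => P r \ C) :=
    (disjoint_biUnion_right _ _ _).2 fun r _ => disjoint_sdiff
  have hpetal : ∀ r ∈ R, ∑ k ∈ P r \ C, f k = ∑ k ∈ P r, f k - ∑ k ∈ C, f k := fun r hr =>
    sum_sdiff_eq_sub (hC r hr)
  rw [hunion, sum_union hcore, sum_biUnion hpetals]
  calc ∑ k ∈ C, f k + ∑ r ∈ R, ∑ k ∈ P r \ C, f k
      ≤ ∑ k ∈ C, f k + ∑ k ∈ P r₀ \ C, f k := by
        refine add_le_add_right (sum_le_single_of_nonpos hr₀ fun r hr _ => ?_) _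
        rw [hpetal r hr]
        exact sub_nonpos.2 ((hP r hr).trans hCf)
    _ = ∑ k ∈ P r₀, f k := by rw [hpetal r₀ hr₀, add_sub_cancel]
    _ ≤ 0 := hP r₀ hr₀

section DegreeBounds

variable {σ ι : Type*} [DecidableEq σ]

theorem sum_add_single_apply (L : Finset σ) (v : σ →₀ ℕ) (i : σ) :
    ∑ k ∈ L, (v + Finsupp.single i 1 : σ →₀ ℕ) k = ∑ k ∈ L, v k + if i ∈ L then 1 else 0 := by
  simp [sum_add_distrib, Finsupp.single_apply]

theorem le_sum_add_single_sub_single {L : Finset σ} {d : ℕ} {v : σ →₀ ℕ} {i j : σ}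
    (hv : d ≤ ∑ k ∈ L, v k) (hj : 0 < v j) (htight : j ∈ L → ∑ k ∈ L, v k = d → i ∈ L) :
    d ≤ ∑ k ∈ L, (v + Finsupp.single i 1 - Finsupp.single j 1 : σ →₀ ℕ) k := by
  have hle : Finsupp.single j 1 ≤ v + Finsupp.single i 1 :=
    Finsupp.single_le_iff.2 (by simp only [Finsupp.coe_add, Pi.add_apply]; omega)
  have h := sum_add_single_apply L (v + Finsupp.single i 1 - Finsupp.single j 1) j
  rw [tsub_add_cancel_of_le hle, sum_add_single_apply] at h
  by_cases hjL : j ∈ L <;> by_cases hiL : i ∈ L <;> simp only [hjL, hiL, if_true, if_false] at h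
  all_goals first | omega | (have := mt (htight hjL) hiL; omega)

theorem mem_and_sum_eq_of_not_le_sum_sub_single {L : Finset σ} {d : ℕ} {u : σ →₀ ℕ} {i : σ}
    (hu : d ≤ ∑ k ∈ L, u k) (hi : 0 < u i) (h : ¬d ≤ ∑ k ∈ L, (u - Finsupp.single i 1 : σ →₀ ℕ) k) :
    i ∈ L ∧ ∑ k ∈ L, u k = d := by
  have hsum := sum_add_single_apply L (u - Finsupp.single i 1) i
  rw [tsub_add_cancel_of_le (Finsupp.single_le_iff.2 hi)] at hsum
  by_cases hiL : i ∈ L <;> simp only [hiL, if_true, if_false] at hsum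
  · exact ⟨hiL, by omega⟩
  · omega

def MeetsDegreeBounds (J : ι → Finset σ) (a : ι → ℕ) (K : Finset σ) (b : ℕ) (m : σ →₀ ℕ) :
    Prop :=
  (∀ t, a t ≤ ∑ k ∈ J t, m k) ∧ b ≤ ∑ k ∈ K, m k

variable {J : ι → Finset σ} {a : ι → ℕ} {K : Finset σ} {b : ℕ} {u v : σ →₀ ℕ} {i j : σ}

theorem MeetsDegreeBounds.add_single_sub_single (hv : MeetsDegreeBounds J a K b v)
    (hj : 0 < v j) (hJ : ∀ t, j ∈ J t → ∑ k ∈ J t, v k = a t → i ∈ J t)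
    (hK : j ∈ K → ∑ k ∈ K, v k = b → i ∈ K) :
    MeetsDegreeBounds J a K b (v + Finsupp.single i 1 - Finsupp.single j 1) :=
  ⟨fun t => le_sum_add_single_sub_single (hv.1 t) hj (hJ t),
    le_sum_add_single_sub_single hv.2 hj hK⟩

theorem MeetsDegreeBounds.exists_tight_of_not_sub_single (hu : MeetsDegreeBounds J a K b u)
    (hi : 0 < u i) (h : ¬MeetsDegreeBounds J a K b (u - Finsupp.single i 1)) :
    (i ∈ K ∧ ∑ k ∈ K, u k = b) ∨ ∃ t, i ∈ J t ∧ ∑ k ∈ J t, u k = a t := by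
  by_cases hJ : ∀ t, a t ≤ ∑ k ∈ J t, (u - Finsupp.single i 1 : σ →₀ ℕ) k
  · exact Or.inl (mem_and_sum_eq_of_not_le_sum_sub_single hu.2 hi fun hK => h ⟨hJ, hK⟩)
  · obtain ⟨t, ht⟩ := not_forall.1 hJ
    exact Or.inr ⟨t, mem_and_sum_eq_of_not_le_sum_sub_single (hu.1 t) hi ht⟩

end DegreeBounds

section Exchange

variable {σ ι : Type*} [Fintype σ] [DecidableEq σ] [Fintype ι]
  {J : ι → Finset σ} {a : ι → ℕ} {K C : Finset σ} {b : ℕ} {u v : σ →₀ ℕ} {i : σ}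

theorem MeetsDegreeBounds.exists_exchange_of_tight_petal (hC : ∀ t, C ⊆ J t)
    (hJC : ∀ r r', r ≠ r' → J r ∩ J r' ⊆ C) (hKJ : ∀ t, Disjoint K (J t))
    (hu : MeetsDegreeBounds J a K b u) (hv : MeetsDegreeBounds J a K b v)
    (hdeg : ∑ k, u k ≤ ∑ k, v k) (hvi : v i < u i) {t : ι} (hit : i ∈ J t) (hiC : i ∉ C)
    (htight : ∑ k ∈ J t, u k = a t) :
    ∃ j, u j < v j ∧ MeetsDegreeBounds J a K b (v + Finsupp.single i 1 - Finsupp.single j 1) := by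
  by_contra! hno
  obtain ⟨g, hg_apply⟩ : ∃ g : σ → ℤ, ∀ k, g k = v k - u k := ⟨_, fun _ => rfl⟩
  have hg : ∀ L : Finset σ, ∑ k ∈ L, g k = ((∑ k ∈ L, v k : ℕ) : ℤ) - (∑ k ∈ L, u k : ℕ) := by
    intro L
    push_cast
    simp only [hg_apply, sum_sub_distrib]
  set R := univ.filter fun r => i ∉ J r ∧ ∑ k ∈ J r, v k = a r
  set K' := K.filter fun _ => ∑ k ∈ K, v k = b with hK'_def
  have hblocked : ∀ k, 0 < g k → k ∈ K' ∨ k ∈ R.biUnion J := by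
    intro k hk
    by_contra! h
    have := hg_apply k
    refine hno k (by omega) (hv.add_single_sub_single (by omega) (fun r hkr hr => ?_) ?_)
    · by_contra hir
      exact h.2 (mem_biUnion.2 ⟨r, by simp [R, hir, hr], hkr⟩)
    · exact fun hkK hK => absurd (mem_filter.2 ⟨hkK, hK⟩) h.1
  have hiK' : i ∉ K' := fun h => disjoint_left.1 (hKJ t) (mem_filter.1 h).1 hit
  have hiR : i ∉ R.biUnion J := by
    simp only [mem_biUnion, R, mem_filter]
    exact fun ⟨r, ⟨_, hir, _⟩, hr⟩ => hir hr
  have hcore : 0 ≤ ∑ k ∈ C, g k := by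
    have hpetal : ∑ k ∈ J t \ C, g k ≤ g i := by
      refine sum_le_single_of_nonpos (mem_sdiff.2 ⟨hit, hiC⟩) fun k hk _ => not_lt.1 fun hpos => ?_
      obtain ⟨hkt, hkC⟩ := mem_sdiff.1 hk
      rcases hblocked k hpos with hkK | hkR
      · exact disjoint_left.1 (hKJ t) (mem_filter.1 hkK).1 hkt
      · obtain ⟨r, hr, hkr⟩ := mem_biUnion.1 hkR
        have hrt : r ≠ t := by rintro rfl; exact (mem_filter.1 hr).2.1 hit
        exact hkC (hJC r t hrt (mem_inter.2 ⟨hkr, hkt⟩))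
    rw [sum_sdiff_eq_sub (hC t), hg, hg] at hpetal
    rw [hg]
    have := hv.1 t
    have := hg_apply i
    omega
  have hK' : ∑ k ∈ K', g k ≤ 0 := by
    by_cases hKv : ∑ k ∈ K, v k = b
    · rw [hK'_def, filter_true_of_mem fun _ _ => hKv, hg]
      have := hu.2
      omega
    · rw [hK'_def, filter_false_of_mem fun _ _ => hKv, sum_empty]
  have hR : ∑ k ∈ R.biUnion J, g k ≤ 0 := by
    refine sum_biUnion_nonpos_of_sunflower (fun r _ => hC r) (fun r _ r' _ => hJC r r')
      (fun r hr => ?_) hcore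
    rw [hg, (mem_filter.1 hr).2.2]
    have := hu.1 r
    omega
  have hKR : Disjoint K' (R.biUnion J) :=
    (disjoint_biUnion_right _ _ _).2 fun r _ => (hKJ r).mono_left (filter_subset _ _)
  have hout : ∑ k ∈ univ \ (K' ∪ R.biUnion J), g k ≤ g i :=
    sum_le_single_of_nonpos (by simp [hiK', hiR]) fun k hk _ => not_lt.1 fun hpos =>
      (mem_sdiff.1 hk).2 (mem_union.2 (hblocked k hpos))
  have htotal := sum_sdiff (subset_univ (K' ∪ R.biUnion J)) (f := g)
  rw [sum_union hKR, hg univ] at htotal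
  have := hg_apply i
  omega

theorem MeetsDegreeBounds.exists_exchange (hC : ∀ t, C ⊆ J t)
    (hJC : ∀ r r', r ≠ r' → J r ∩ J r' ⊆ C) (hKJ : ∀ t, Disjoint K (J t))
    (hu : MeetsDegreeBounds J a K b u) (hu' : ¬MeetsDegreeBounds J a K b (u - Finsupp.single i 1))
    (hv : MeetsDegreeBounds J a K b v) (hdeg : ∑ k, u k ≤ ∑ k, v k) (hvi : v i < u i) :
    ∃ j, u j < v j ∧ MeetsDegreeBounds J a K b (v + Finsupp.single i 1 - Finsupp.single j 1) := by
  rcases hu.exists_tight_of_not_sub_single ((Nat.zero_le _).trans_lt hvi) hu' with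
    ⟨hiK, hKu⟩ | ⟨t, hit, hJu⟩
  · obtain ⟨j, hjK, hj⟩ := exists_lt_of_sum_le_of_lt (hKu.trans_le hv.2) hiK hvi
    refine ⟨j, hj, hv.add_single_sub_single (by omega) (fun r hjr => ?_) fun _ _ => hiK⟩
    exact absurd hjr (disjoint_left.1 (hKJ r) hjK)
  by_cases hiC : i ∈ C
  · obtain ⟨j, hjt, hj⟩ := exists_lt_of_sum_le_of_lt (hJu.trans_le (hv.1 t)) hit hvi
    refine ⟨j, hj, hv.add_single_sub_single (by omega) (fun r _ _ => hC r hiC) fun hjK => ?_⟩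
    exact absurd hjt (disjoint_left.1 (hKJ t) hjK)
  · exact hu.exists_exchange_of_tight_petal hC hJC hKJ hv hdeg hvi hit hiC hJu

end Exchange

section MonomialIdeal

variable {n : ℕ} {K : Type*} [Field K]

theorem MinGen.monomial_sub_single_notMem {I : Ideal (MvPolynomial (Fin n) K)}
    {u : Fin n →₀ ℕ} {i : Fin n} (hu : MinGen I u) (hi : 0 < u i) :
    monomial (u - Finsupp.single i 1) (1 : K) ∉ I :=
  hu.2 _ tsub_le_self fun h => by
    have := DFunLike.congr_fun h i
    simp only [Finsupp.tsub_apply, Finsupp.single_eq_same] at this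
    omega

theorem mIdeal_pow_le_span_monomial (L : Finset (Fin n)) (a : ℕ) :
    mIdeal K ↑L ^ a ≤
      Ideal.span ((fun m => monomial m (1 : K)) '' {m | a ≤ ∑ k ∈ L, m k}) := by
  induction a with
  | zero =>
    rw [pow_zero, Ideal.one_eq_top, top_le_iff, Ideal.eq_top_iff_one]
    exact Ideal.subset_span ⟨0, Nat.zero_le _, by simp [monomial_zero']⟩
  | succ a ih =>
    rw [pow_succ, mIdeal]
    refine (Ideal.mul_mono_left ih).trans ?_
    rw [Ideal.span_mul_span']
    refine Ideal.span_mono ?_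
    rintro _ ⟨_, ⟨m, hm, rfl⟩, _, ⟨k, hk, rfl⟩, rfl⟩
    refine ⟨m + Finsupp.single k 1, ?_, by simp [X, monomial_mul]⟩
    show a + 1 ≤ _
    rw [sum_add_single_apply, if_pos (mem_coe.1 hk)]
    exact Nat.succ_le_succ hm

theorem monomial_mem_mIdeal_pow_iff (L : Finset (Fin n)) (a : ℕ) (m : Fin n →₀ ℕ) :
    monomial m (1 : K) ∈ mIdeal K ↑L ^ a ↔ a ≤ ∑ k ∈ L, m k := by
  refine ⟨fun h => ?_, fun h => ?_⟩
  · obtain ⟨m', hm', hle⟩ := mem_ideal_span_monomial_image.1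
      (mIdeal_pow_le_span_monomial L a h) m (by simp)
    exact hm'.trans (sum_le_sum fun k _ => hle k)
  · induction a generalizing m with
    | zero => simp
    | succ a ih =>
      obtain ⟨k, hk, hmk⟩ : ∃ k ∈ L, m k ≠ 0 := by
        by_contra! hc
        rw [sum_eq_zero hc] at h
        omega
      have hsplit : m - Finsupp.single k 1 + Finsupp.single k 1 = m :=
        tsub_add_cancel_of_le (Finsupp.single_le_iff.2 (Nat.one_le_iff_ne_zero.2 hmk))
      have hsum := sum_add_single_apply L (m - Finsupp.single k 1) k
      rw [hsplit, if_pos hk] at hsum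
      rw [← hsplit, ← mul_one (1 : K), ← monomial_mul, pow_succ]
      exact Ideal.mul_mem_mul (ih _ (by omega)) (Ideal.subset_span ⟨k, hk, rfl⟩)

theorem monomial_mem_iff_meetsDegreeBounds {ι : Type*}
    (J : ι → Finset (Fin n)) (a : ι → ℕ) (L : Finset (Fin n)) (b : ℕ) (m : Fin n →₀ ℕ) :
    monomial m (1 : K) ∈ (⨅ t, mIdeal K ↑(J t) ^ a t) ⊓ mIdeal K ↑L ^ b ↔
      MeetsDegreeBounds J a L b m := by
  simp only [Submodule.mem_inf, Submodule.mem_iInf, monomial_mem_mIdeal_pow_iff,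
    MeetsDegreeBounds]

end MonomialIdeal

theorem stmt4_general (K : Type*) [Field K] {n s : ℕ}
    (J : Fin s → Set (Fin n)) (Kset : Set (Fin n))
    (hint : ∀ i j : Fin s, i < j → J i ∩ J j = ⋂ t, J t)
    (hdisj : ∀ t, Kset ∩ J t = ∅)
    (a : Fin s → ℕ) (b : ℕ) :
    NPDE ((⨅ t, (mIdeal K (J t)) ^ (a t)) ⊓ (mIdeal K Kset) ^ b) := by
  lift J to Fin s → Finset (Fin n) using fun t => Set.toFinite _
  lift Kset to Finset (Fin n) using Set.toFinite _
  set C := univ.filter fun k => ∀ t, k ∈ J t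
  have hC : ∀ t, C ⊆ J t := fun t k hk => (mem_filter.1 hk).2 t
  have hJC : ∀ r r', r ≠ r' → J r ∩ J r' ⊆ C := by
    intro r r' hrr' k hk
    have hk' : k ∈ (↑(J r) ∩ ↑(J r') : Set (Fin n)) := by simpa using hk
    rcases hrr'.lt_or_gt with h | h
    · rw [hint r r' h] at hk'
      simpa [C] using hk'
    · rw [Set.inter_comm, hint r' r h] at hk'
      simpa [C] using hk'
  have hKJ : ∀ t, Disjoint Kset (J t) := fun t => by
    rw [← disjoint_coe, Set.disjoint_iff_inter_eq_empty]
    exact hdisj t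
  have hmem := monomial_mem_iff_meetsDegreeBounds (K := K) J a Kset b
  intro u v hu hv hdeg i hvi
  obtain ⟨j, hj, hex⟩ := ((hmem u).1 hu.1).exists_exchange hC hJC hKJ
    (fun h => hu.monomial_sub_single_notMem ((Nat.zero_le _).trans_lt hvi) ((hmem _).2 h))
    ((hmem v).1 hv.1) (by simpa [expDeg, Finsupp.sum_fintype] using hdeg) hvi
  exact ⟨j, hj, (hmem _).2 hex⟩

theorem stmt4 (K : Type*) [Field K] {n s : ℕ}
    (J : Fin s → Set (Fin n)) (Kset : Set (Fin n))
    (hJne : ∀ t, (J t).Nonempty) (hKne : Kset.Nonempty)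
    (hint : ∀ i j : Fin s, i < j → J i ∩ J j = ⋂ t, J t)
    (hdisj : ∀ t, Kset ∩ J t = ∅)
    (a : Fin s → ℕ) (ha : ∀ t, 0 < a t) (b : ℕ) (hb : 0 < b) :
    NPDE ((⨅ t, (mIdeal K (J t)) ^ (a t)) ⊓ (mIdeal K Kset) ^ b) :=
  stmt4_general K J Kset hint hdisj a b
end

section
/- For any two subsets J_1, J_2 ⊆ [n] and any positive integers a, b, the ideal I = m_{J_1}^a ∩ m_{J_2}^b in K[x_1,...,x_n] satisfies the non-pure dual exchange property. -/
open MvPolynomial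

/-!
A monomial `x^m` lies in `m_J^a` exactly when its `J`-degree `∑_{k ∈ J} m_k` is at least `a`, so
membership in `I` is a pair of linear inequalities on exponent vectors. If `u` is a minimal
generator and `v_i < u_i`, then `x^u / x_i ∉ I`, so (say) `i ∈ J_1`; trading some `x_j` with
`u_j < v_j` for `x_i` in `x^v` does not lower its `J_1`-degree. Its `J_2`-degree can only fall below
`b` when `i ∉ J_2` and `v` has `J_2`-degree exactly `b ≤ deg_{J_2} u`; comparing total degrees
outside `J_2` then provides such a `j` outside `J_2`.
-/

open Finsupp

namespace Finsupp

variable {σ : Type*}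

open Classical in
noncomputable def degreeOn (J : Set σ) : (σ →₀ ℕ) →+ ℕ :=
  degree.comp (filterAddHom (· ∈ J))

open Classical in
lemma degreeOn_apply (J : Set σ) (m : σ →₀ ℕ) : degreeOn J m = degree (m.filter (· ∈ J)) := rfl

lemma degreeOn_add_degreeOn_compl (J : Set σ) (m : σ →₀ ℕ) :
    degreeOn J m + degreeOn Jᶜ m = degree m := by
  classical
  rw [degreeOn_apply, degreeOn_apply, ← map_add]
  congr 1
  ext k
  simp

lemma degreeOn_single_of_mem {J : Set σ} {i : σ} (hi : i ∈ J) (k : ℕ) :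
    degreeOn J (single i k) = k := by
  classical
  simp [degreeOn_apply, filter_single_of_pos _ hi]

lemma degreeOn_single_of_notMem {J : Set σ} {i : σ} (hi : i ∉ J) (k : ℕ) :
    degreeOn J (single i k) = 0 := by
  classical
  simp [degreeOn_apply, filter_single_of_neg _ hi]

lemma degreeOn_single_le (J : Set σ) (i : σ) (k : ℕ) : degreeOn J (single i k) ≤ k := by
  by_cases hi : i ∈ J
  · rw [degreeOn_single_of_mem hi]
  · rw [degreeOn_single_of_notMem hi]; exact k.zero_le

lemma exists_lt_of_degree_le {u v : σ →₀ ℕ} (h : degree u ≤ degree v) {i : σ} (hi : v i < u i) :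
    ∃ j, u j < v j := by
  by_contra! hvu
  have hpos : 0 < degree (u - v) :=
    lt_of_lt_of_le (by simpa using hi) (le_degree i (u - v))
  have hsplit : degree u = degree v + degree (u - v) := by
    rw [← map_add, add_tsub_cancel_of_le hvu]
  omega

lemma exists_mem_lt_of_degreeOn_le {J : Set σ} {u v : σ →₀ ℕ} (h : degreeOn J u ≤ degreeOn J v)
    {i : σ} (hi : v i < u i) (hiJ : i ∈ J) : ∃ j ∈ J, u j < v j := by
  classical
  rw [degreeOn_apply, degreeOn_apply] at h
  obtain ⟨j, hj⟩ := exists_lt_of_degree_le h (i := i) (by simpa [filter_apply, hiJ] using hi)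
  by_cases hjJ : j ∈ J
  · exact ⟨j, hjJ, by simpa [filter_apply, hjJ] using hj⟩
  · simp [hjJ] at hj

lemma mem_of_degreeOn_tsub_single_lt {J : Set σ} {m : σ →₀ ℕ} {i : σ}
    (h : degreeOn J (m - single i 1) < degreeOn J m) : i ∈ J := by
  classical
  by_contra hi
  rw [degreeOn_apply, degreeOn_apply] at h
  refine h.ne (congrArg degree ?_)
  ext k
  by_cases hk : k = i
  · simp [hk, hi]
  · simp [filter_apply, Ne.symm hk]

lemma exists_exchange {u v : σ →₀ ℕ} (hdeg : degree u ≤ degree v) {i : σ} (hi : v i < u i)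
    {P : Set σ} (hiP : i ∈ P) (Q : Set σ) :
    ∃ j, u j < v j ∧ degreeOn P v ≤ degreeOn P (v + single i 1 - single j 1) ∧
      min (degreeOn Q u) (degreeOn Q v) ≤ degreeOn Q (v + single i 1 - single j 1) := by
  have hbalance : ∀ (J : Set σ) {j}, u j < v j →
      degreeOn J (v + single i 1 - single j 1) + degreeOn J (single j 1) =
        degreeOn J v + degreeOn J (single i 1) := fun J j hj => by
    rw [← map_add, ← map_add, tsub_add_cancel_of_le (single_le_iff.2 (by simp; omega))]
  have hP : ∀ {j}, u j < v j → degreeOn P v ≤ degreeOn P (v + single i 1 - single j 1) :=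
    fun {j} hj => by
      have := hbalance P hj
      have := degreeOn_single_le P j 1
      rw [degreeOn_single_of_mem hiP] at *
      omega
  by_cases hQ : i ∉ Q ∧ degreeOn Q v ≤ degreeOn Q u
  · have hcompl : degreeOn Qᶜ u ≤ degreeOn Qᶜ v := by
      have := degreeOn_add_degreeOn_compl Q u
      have := degreeOn_add_degreeOn_compl Q v
      omega
    obtain ⟨j, hjQ, hj⟩ := exists_mem_lt_of_degreeOn_le hcompl hi hQ.1
    refine ⟨j, hj, hP hj, ?_⟩
    have := hbalance Q hj
    rw [degreeOn_single_of_notMem hQ.1, degreeOn_single_of_notMem hjQ] at this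
    omega
  · obtain ⟨j, hj⟩ := exists_lt_of_degree_le hdeg hi
    refine ⟨j, hj, hP hj, ?_⟩
    have := hbalance Q hj
    have := degreeOn_single_le Q j 1
    by_cases hiQ : i ∈ Q
    · rw [degreeOn_single_of_mem hiQ] at *
      omega
    · have := not_and.mp hQ hiQ
      rw [degreeOn_single_of_notMem hiQ] at *
      omega

end Finsupp

namespace MvPolynomial

variable {σ R : Type*} [CommSemiring R]

lemma monomial_mem_span_X_image_pow {J : Set σ} {a : ℕ} {m : σ →₀ ℕ} (h : a ≤ degreeOn J m) :
    monomial m (1 : R) ∈ Ideal.span (X '' J) ^ a := by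
  classical
  have hsplit : m = m.filter (· ∉ J) + m.filter (· ∈ J) := by
    rw [add_comm, filter_add_filter_not]
  rw [hsplit, ← mul_one (1 : R), ← monomial_mul]
  refine Ideal.mul_mem_left _ _ (Ideal.pow_le_pow_right h ?_)
  rw [degreeOn_apply, monomial_eq, C_1, one_mul, Finsupp.prod, degree_apply,
    ← Finset.prod_pow_eq_pow_sum]
  refine Ideal.prod_mem_prod fun k hk => Ideal.pow_mem_pow (Ideal.subset_span ?_) _
  exact Set.mem_image_of_mem X (Finset.mem_filter.1 hk).2

lemma le_degreeOn_of_monomial_mem_span_X_image_pow [Nontrivial R] {J : Set σ} {a : ℕ}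
    {m : σ →₀ ℕ} (h : monomial m (1 : R) ∈ Ideal.span (X '' J) ^ a) : a ≤ degreeOn J m := by
  classical
  -- substitutes `1` for the variables outside `J`
  let restrict : MvPolynomial σ R →+* MvPolynomial σ R :=
    AddMonoidAlgebra.mapDomainRingHom R (filterAddHom (· ∈ J))
  have hmono : ∀ m', restrict (monomial m' 1) = monomial (m'.filter (· ∈ J)) 1 := fun m' =>
    AddMonoidAlgebra.mapDomain_single
  have hspan : Ideal.map restrict (Ideal.span (X '' J)) ≤ idealOfVars σ R := by
    rw [Ideal.map_span, Ideal.span_le]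
    rintro _ ⟨_, ⟨k, hk, rfl⟩, rfl⟩
    rw [X, hmono, filter_single_of_pos _ hk]
    exact Ideal.subset_span ⟨k, rfl⟩
  have := Ideal.map_pow restrict _ a ▸ Ideal.mem_map_of_mem restrict h
  rw [hmono] at this
  exact (monomial_mem_pow_idealOfVars_iff a _ one_ne_zero).1 (Ideal.pow_right_mono hspan a this)

theorem monomial_mem_span_X_image_pow_iff [Nontrivial R] {J : Set σ} {a : ℕ} {m : σ →₀ ℕ} :
    monomial m (1 : R) ∈ Ideal.span (X '' J) ^ a ↔ a ≤ degreeOn J m :=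
  ⟨le_degreeOn_of_monomial_mem_span_X_image_pow, monomial_mem_span_X_image_pow⟩

end MvPolynomial

lemma MinGen.monomial_tsub_single_notMem {K : Type*} [Field K] {n : ℕ}
    {I : Ideal (MvPolynomial (Fin n) K)} {u : Fin n →₀ ℕ} (hu : MinGen I u) {i : Fin n}
    (hi : 0 < u i) : monomial (u - Finsupp.single i 1) (1 : K) ∉ I :=
  hu.2 _ tsub_le_self fun h => by
    have := congrArg (· i) h
    simp only [Finsupp.tsub_apply, Finsupp.single_eq_same] at this
    omega

theorem stmt5_general (K : Type*) [Field K] {n : ℕ} (J1 J2 : Set (Fin n))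
    (a b : ℕ) :
    NPDE ((mIdeal K J1) ^ a ⊓ (mIdeal K J2) ^ b) := by
  have mem : ∀ m, monomial m (1 : K) ∈ (mIdeal K J1) ^ a ⊓ (mIdeal K J2) ^ b ↔
      a ≤ degreeOn J1 m ∧ b ≤ degreeOn J2 m := fun m => by
    simp only [Submodule.mem_inf, mIdeal, monomial_mem_span_X_image_pow_iff]
  -- `expDeg` is definitionally `Finsupp.degree`
  intro u v hu hv hdeg i hi
  obtain ⟨hu1, hu2⟩ := (mem u).1 hu.1
  obtain ⟨hv1, hv2⟩ := (mem v).1 hv.1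
  have hdrop := hu.monomial_tsub_single_notMem (i := i) (by omega)
  rw [mem, not_and_or, not_le, not_le] at hdrop
  rcases hdrop with h | h
  · obtain ⟨j, hj, h1, h2⟩ :=
      exists_exchange hdeg hi (mem_of_degreeOn_tsub_single_lt (h.trans_le hu1)) J2
    exact ⟨j, hj, (mem _).2 ⟨hv1.trans h1, (le_min hu2 hv2).trans h2⟩⟩
  · obtain ⟨j, hj, h2, h1⟩ :=
      exists_exchange hdeg hi (mem_of_degreeOn_tsub_single_lt (h.trans_le hu2)) J1
    exact ⟨j, hj, (mem _).2 ⟨(le_min hu1 hv1).trans h1, hv2.trans h2⟩⟩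

theorem stmt5 (K : Type*) [Field K] {n : ℕ} (J1 J2 : Set (Fin n))
    (a b : ℕ) (ha : 0 < a) (hb : 0 < b) :
    NPDE ((mIdeal K J1) ^ a ⊓ (mIdeal K J2) ^ b) :=
  stmt5_general K J1 J2 a b
end

section
/- Let I = (x_1,x_2) ∩ (x_2,x_3,x_4) ∩ (x_4,x_5) in K[x_1,...,x_5]. Then I does not satisfy the non-pure dual exchange property: taking u = x_2x_5 and v = x_1x_4 in G(I), one has deg(u) = deg(v) and deg_{x_5}(v) < deg_{x_5}(u), but neither x_1x_5 nor x_4x_5 belongs to I. -/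
/-!
A monomial lies in `I = (x₁,x₂) ∩ (x₂,x₃,x₄) ∩ (x₄,x₅)` iff its support meets each of
`{x₁,x₂}`, `{x₂,x₃,x₄}`, `{x₄,x₅}`. Both `x₂x₅` and `x₁x₄` are minimal such supports, and the only
variables in which `v = x₁x₄` exceeds `u = x₂x₅` are `x₁` and `x₄`; exchanging `x₅` for them gives
`x₄x₅`, which misses `{x₁,x₂}`, and `x₁x₅`, which misses `{x₂,x₃,x₄}`.
-/

open MvPolynomial

lemma monomial_mem_mIdeal_iff {n : ℕ} {K : Type*} [Field K] (J : Set (Fin n))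
    (m : Fin n →₀ ℕ) : monomial m (1 : K) ∈ mIdeal K J ↔ ∃ i ∈ J, m i ≠ 0 := by
  classical
  simp [mIdeal, mem_ideal_span_X_image, support_monomial]

lemma minGen_of_forall_sub_single_notMem {n : ℕ} {K : Type*} [Field K]
    {I : Ideal (MvPolynomial (Fin n) K)} {m : Fin n →₀ ℕ} (hm : monomial m (1 : K) ∈ I)
    (h : ∀ i, m i ≠ 0 → monomial (m - Finsupp.single i 1) (1 : K) ∉ I) : MinGen I m := by
  refine ⟨hm, fun m' hle hne hm' => ?_⟩
  obtain ⟨i, hi⟩ := DFunLike.ne_iff.mp hne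
  have hlt : m' i < m i := lt_of_le_of_ne (hle i) hi
  have hle' : m' ≤ m - Finsupp.single i 1 := fun j => by
    rcases eq_or_ne j i with rfl | hj
    · simpa using Nat.le_sub_one_of_lt hlt
    · simpa [hj.symm] using hle j
  exact h i (by omega) (I.mem_of_dvd (monomial_dvd_monomial.mpr ⟨Or.inr hle', one_dvd _⟩) hm')

theorem stmt6 (K : Type*) [Field K] :
    let I : Ideal (MvPolynomial (Fin 5) K) :=
      mIdeal K {0, 1} ⊓ mIdeal K {1, 2, 3} ⊓ mIdeal K {3, 4}
    let u : Fin 5 →₀ ℕ := Finsupp.single 1 1 + Finsupp.single 4 1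
    let v : Fin 5 →₀ ℕ := Finsupp.single 0 1 + Finsupp.single 3 1
    ¬ NPDE I ∧ MinGen I u ∧ MinGen I v ∧ expDeg u = expDeg v ∧ v 4 < u 4 ∧
    (X 0 * X 4 : MvPolynomial (Fin 5) K) ∉ I ∧
    (X 3 * X 4 : MvPolynomial (Fin 5) K) ∉ I := by
  intro I u v
  have memI : ∀ m, monomial m (1 : K) ∈ I ↔
      (m 0 ≠ 0 ∨ m 1 ≠ 0) ∧ (m 1 ≠ 0 ∨ m 2 ≠ 0 ∨ m 3 ≠ 0) ∧ (m 3 ≠ 0 ∨ m 4 ≠ 0) := fun m => by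
    simp only [I, Ideal.mem_inf, monomial_mem_mIdeal_iff, Set.mem_insert_iff,
      Set.mem_singleton_iff, exists_eq_or_imp, exists_eq_left, and_assoc]
  have hu : MinGen I u := minGen_of_forall_sub_single_notMem (by simp [memI, u]) fun i hi => by
    fin_cases i <;> simp_all [u]
  have hv : MinGen I v := minGen_of_forall_sub_single_notMem (by simp [memI, v]) fun i hi => by
    fin_cases i <;> simp_all [v]
  have hdeg : expDeg u = expDeg v := by
    simp [expDeg, u, v, Finsupp.sum_add_index']
  have hvu : v 4 < u 4 := by simp [u, v]
  refine ⟨fun hNPDE => ?_, hu, hv, hdeg, hvu, ?_, ?_⟩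
  · obtain ⟨j, hj, hmem⟩ := hNPDE u v hu hv hdeg.le 4 hvu
    fin_cases j <;> simp_all [u, v]
  all_goals simp [X, monomial_mul, memI]
end

section
/- Let J_1, J_2, J_3 ⊆ [n] with J_1 ∩ J_3 = ∅. Then for any positive integers a_1 ≥ a_2 ≥ a_3, the ideal I = m_{J_1}^{a_1} ∩ m_{J_2}^{a_2} ∩ m_{J_3}^{a_3} in K[x_1,...,x_n] is weakly polymatroidal (with respect to a suitable total order on the variables). -/
open MvPolynomial

/-!
Order the variables by region: first `J₁ ∩ J₂`, then `J₁ \ J₂`, `J₂ ∩ J₃`, `J₂ \ (J₁ ∪ J₃)`,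
`J₃ \ J₂`, and the rest. A monomial lies in `I` iff its `J_l`-degree is at least `a_l` for each
`l`, and in a minimal generator every variable of the support lies in some `J_l` whose
constraint is tight. For minimal generators `u >_lex v` first differing at `x_c`, it suffices to
find a later variable `x_d` dividing `v` such that every `J_l` containing `d` contains `c`: then
`x_c v / x_d` loses no `J_l`-degree. If `c ∈ J₁`, the `J₁`-degree of `v` is not exhausted by the
variables up to `x_c` (there `u` is tight for `J₁`, or for `J₂` with all these variables in
`J₁ ∩ J₂` and `a₂ ≤ a₁`), so some later `x_d` with `d ∈ J₁` divides `v`; likewise with `J₂` if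
`c` lies in `J₂` only. In the remaining cases any later variable dividing `v` works, and one
exists by minimality of `u`.
-/

open Finset

section DegIn

variable {n : ℕ}

noncomputable def degIn (J : Set (Fin n)) (m : Fin n →₀ ℕ) : ℕ := ∑ i, J.indicator m i

variable {J : Set (Fin n)}

lemma degIn_add (J : Set (Fin n)) (m m' : Fin n →₀ ℕ) :
    degIn J (m + m') = degIn J m + degIn J m' := by
  simp only [degIn, Finsupp.coe_add, Set.indicator_add', Pi.add_apply, sum_add_distrib]

lemma degIn_mono (J : Set (Fin n)) : Monotone (degIn J) :=
  fun _ _ h => sum_le_sum fun i _ => Set.indicator_le_indicator (h i)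

lemma degIn_single_of_mem {i : Fin n} (hi : i ∈ J) (e : ℕ) :
    degIn J (Finsupp.single i e) = e := by
  rw [degIn, sum_eq_single i (fun k _ hk => by simp [Finsupp.single_eq_of_ne hk]) (by simp),
    Set.indicator_of_mem hi, Finsupp.single_eq_same]

lemma degIn_single_of_notMem {i : Fin n} (hi : i ∉ J) (e : ℕ) :
    degIn J (Finsupp.single i e) = 0 :=
  sum_eq_zero fun k _ => by
    by_cases hk : k = i
    · subst hk; exact Set.indicator_of_notMem hi _
    · simp [Finsupp.single_eq_of_ne' (Ne.symm hk)]

lemma degIn_le_degIn_tsub_add (J : Set (Fin n)) (m m' : Fin n →₀ ℕ) :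
    degIn J m ≤ degIn J (m - m') + degIn J m' :=
  degIn_add J (m - m') m' ▸ degIn_mono J le_tsub_add

end DegIn

section PowMIdeal

variable {n : ℕ} {K : Type*} [Field K]

lemma pow_mIdeal_le_span_monomial (J : Set (Fin n)) (a : ℕ) :
    mIdeal K J ^ a ≤ Ideal.span ((fun m => monomial m (1 : K)) '' {m | a ≤ degIn J m}) := by
  induction a with
  | zero =>
    rw [pow_zero, Submodule.one_le]
    exact Ideal.subset_span ⟨0, Nat.zero_le _, by simp⟩
  | succ a ih =>
    rw [pow_succ, mIdeal]
    refine (Ideal.mul_mono_left ih).trans ?_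
    rw [Ideal.span_mul_span', Ideal.span_le]
    rintro _ ⟨_, ⟨m, hm, rfl⟩, _, ⟨i, hi, rfl⟩, rfl⟩
    refine Ideal.subset_span ⟨m + Finsupp.single i 1, ?_, by simp [X, monomial_mul]⟩
    simpa [degIn_add, degIn_single_of_mem hi] using hm

lemma monomial_mem_pow_mIdeal_iff (J : Set (Fin n)) (a : ℕ) (m : Fin n →₀ ℕ) :
    monomial m (1 : K) ∈ mIdeal K J ^ a ↔ a ≤ degIn J m := by
  refine ⟨fun h => ?_, fun h => ?_⟩
  · obtain ⟨m', hm', hle⟩ := mem_ideal_span_monomial_image.mp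
      (pow_mIdeal_le_span_monomial J a h) m (by simp)
    exact hm'.trans (degIn_mono J hle)
  induction a generalizing m with
  | zero => simp
  | succ a ih =>
    obtain ⟨i, -, hi⟩ := exists_ne_zero_of_sum_ne_zero (s := univ) (f := J.indicator m)
      (by unfold degIn at h; omega)
    have hiJ : i ∈ J := Set.mem_of_indicator_ne_zero hi
    rw [Set.indicator_of_mem hiJ] at hi
    have hm : m - Finsupp.single i 1 + Finsupp.single i 1 = m :=
      tsub_add_cancel_of_le (Finsupp.single_le_iff.mpr (Nat.pos_of_ne_zero hi))
    rw [← hm, ← mul_one (1 : K), ← monomial_mul, pow_succ]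
    refine Ideal.mul_mem_mul (ih _ ?_) (Ideal.subset_span ⟨i, hiJ, rfl⟩)
    have := degIn_add J (m - Finsupp.single i 1) (Finsupp.single i 1)
    rw [hm, degIn_single_of_mem hiJ] at this
    omega

end PowMIdeal

section Prefix

variable {n : ℕ} (σ : Equiv.Perm (Fin n)) (t : Fin n)

noncomputable def prefixDegIn (J : Set (Fin n)) (m : Fin n →₀ ℕ) : ℕ :=
  ∑ k ∈ Iic t, J.indicator m (σ k)

variable {σ t} {J J' : Set (Fin n)}

lemma prefixDegIn_le_degIn (m : Fin n →₀ ℕ) : prefixDegIn σ t J m ≤ degIn J m := by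
  rw [degIn, ← Equiv.sum_comp σ]
  exact sum_le_sum_of_subset (subset_univ _)

lemma prefixDegIn_mono_set (h : ∀ k ≤ t, σ k ∈ J → σ k ∈ J') (m : Fin n →₀ ℕ) :
    prefixDegIn σ t J m ≤ prefixDegIn σ t J' m := by
  refine sum_le_sum fun k hk => ?_
  by_cases hkJ : σ k ∈ J
  · rw [Set.indicator_of_mem hkJ, Set.indicator_of_mem (h k (mem_Iic.mp hk) hkJ)]
  · rw [Set.indicator_of_notMem hkJ]
    exact Nat.zero_le _

lemma exists_lt_mem_pos_of_prefixDegIn_le {u v : Fin n →₀ ℕ}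
    (hpre : ∀ k < t, u (σ k) = v (σ k)) (ht : v (σ t) < u (σ t)) (hc : σ t ∈ J)
    (hle : prefixDegIn σ t J u ≤ degIn J v) :
    ∃ j, t < j ∧ σ j ∈ J ∧ 0 < v (σ j) := by
  by_contra! h
  have hv : degIn J v = prefixDegIn σ t J v := by
    rw [degIn, ← Equiv.sum_comp σ]
    refine (sum_subset (subset_univ _) fun k _ hk => ?_).symm
    by_cases hkJ : σ k ∈ J
    · rw [Set.indicator_of_mem hkJ]
      exact Nat.le_zero.mp (h k (by simpa using hk) hkJ)
    · exact Set.indicator_of_notMem hkJ _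
  have hlt : prefixDegIn σ t J v < prefixDegIn σ t J u := by
    refine sum_lt_sum (fun k hk => ?_) ⟨t, mem_Iic.mpr le_rfl, ?_⟩
    · rcases (mem_Iic.mp hk).lt_or_eq with hk | rfl
      · exact Set.indicator_le_indicator (hpre k hk).ge
      · exact Set.indicator_le_indicator ht.le
    · simpa [Set.indicator_of_mem hc] using ht
  omega

end Prefix

section MinGen

variable {n : ℕ} {K : Type*} [Field K] {I : Ideal (MvPolynomial (Fin n) K)}

lemma MinGen.exists_lt_pos {u v : Fin n →₀ ℕ} (hu : MinGen I u) (hv : monomial v (1 : K) ∈ I)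
    (σ : Equiv.Perm (Fin n)) {t : Fin n} (hpre : ∀ k < t, u (σ k) = v (σ k))
    (ht : v (σ t) < u (σ t)) : ∃ j, t < j ∧ 0 < v (σ j) := by
  by_contra! h
  refine hu.2 v (fun i => ?_) (fun hvu => ht.ne (hvu ▸ rfl)) hv
  obtain ⟨k, rfl⟩ := σ.surjective i
  rcases lt_trichotomy k t with hk | rfl | hk
  · exact (hpre k hk).ge
  · exact ht.le
  · exact (h k hk).trans (Nat.zero_le _)

variable {ι : Type*} {J : ι → Set (Fin n)} {a : ι → ℕ}

lemma MinGen.exists_degIn_eq (hI : ∀ m, monomial m (1 : K) ∈ I ↔ ∀ l, a l ≤ degIn (J l) m)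
    {w : Fin n →₀ ℕ} (hw : MinGen I w) {d : Fin n} (hd : 0 < w d) :
    ∃ l, d ∈ J l ∧ degIn (J l) w = a l := by
  have hne : w - Finsupp.single d 1 ≠ w := fun h => by
    have := DFunLike.congr_fun h d
    simp only [Finsupp.coe_tsub, Pi.sub_apply, Finsupp.single_eq_same] at this
    omega
  obtain ⟨l, hl⟩ : ∃ l, degIn (J l) (w - Finsupp.single d 1) < a l := by
    simpa [hI] using hw.2 _ tsub_le_self hne
  have hwl := (hI w).mp hw.1 l
  have hsplit := degIn_le_degIn_tsub_add (J l) w (Finsupp.single d 1)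
  by_cases hdl : d ∈ J l
  · rw [degIn_single_of_mem hdl] at hsplit
    exact ⟨l, hdl, by omega⟩
  · rw [degIn_single_of_notMem hdl] at hsplit
    omega

lemma monomial_add_single_tsub_single_mem
    (hI : ∀ m, monomial m (1 : K) ∈ I ↔ ∀ l, a l ≤ degIn (J l) m)
    {v : Fin n →₀ ℕ} (hv : monomial v (1 : K) ∈ I) {c d : Fin n}
    (hdc : ∀ l, d ∈ J l → c ∈ J l) :
    monomial (v + Finsupp.single c 1 - Finsupp.single d 1) (1 : K) ∈ I := by
  rw [hI] at hv ⊢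
  intro l
  have hsplit := degIn_le_degIn_tsub_add (J l) (v + Finsupp.single c 1) (Finsupp.single d 1)
  have hvl := hv l
  rw [degIn_add] at hsplit
  by_cases hd : d ∈ J l
  · rw [degIn_single_of_mem hd, degIn_single_of_mem (hdc l hd)] at hsplit
    omega
  · rw [degIn_single_of_notMem hd] at hsplit
    omega

end MinGen

section ThreeIdeals

variable {n : ℕ} (J1 J2 J3 : Set (Fin n))

open Classical in
noncomputable def regionRank (i : Fin n) : ℕ :=
  if i ∈ J1 then (if i ∈ J2 then 0 else 1)
  else if i ∈ J2 then (if i ∈ J3 then 2 else 3)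
  else if i ∈ J3 then 4 else 5

variable {J1 J2 J3}

lemma mem_of_regionRank_le_of_mem_inter {i c : Fin n}
    (hic : regionRank J1 J2 J3 i ≤ regionRank J1 J2 J3 c) (hc1 : c ∈ J1) (hc2 : c ∈ J2) :
    i ∈ J2 := by
  unfold regionRank at hic
  split_ifs at hic <;> simp_all

lemma mem_of_regionRank_le (h13 : J1 ∩ J3 = ∅) {c d : Fin n}
    (hcd : regionRank J1 J2 J3 c ≤ regionRank J1 J2 J3 d)
    (h1 : c ∈ J1 → d ∈ J1) (h2 : c ∈ J2 → c ∉ J1 → c ∉ J3 → d ∈ J2) :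
    ∀ l, d ∈ ![J1, J2, J3] l → c ∈ ![J1, J2, J3] l := by
  have hd13 : d ∈ J1 → d ∉ J3 := fun hd1 hd3 => Set.eq_empty_iff_forall_notMem.mp h13 d ⟨hd1, hd3⟩
  simp only [Fin.forall_fin_succ]
  unfold regionRank at hcd
  split_ifs at hcd <;> simp_all

lemma monomial_mem_inf_pow_mIdeal_iff {K : Type*} [Field K] (a1 a2 a3 : ℕ) (m : Fin n →₀ ℕ) :
    monomial m (1 : K) ∈ mIdeal K J1 ^ a1 ⊓ mIdeal K J2 ^ a2 ⊓ mIdeal K J3 ^ a3 ↔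
      ∀ l, ![a1, a2, a3] l ≤ degIn (![J1, J2, J3] l) m := by
  simp [Fin.forall_fin_succ, monomial_mem_pow_mIdeal_iff, and_assoc]

theorem weaklyPolymatroidal_inf_pow_mIdeal (K : Type*) [Field K] (h13 : J1 ∩ J3 = ∅)
    {a1 a2 a3 : ℕ} (h21 : a2 ≤ a1) :
    WeaklyPolymatroidal (mIdeal K J1 ^ a1 ⊓ mIdeal K J2 ^ a2 ⊓ mIdeal K J3 ^ a3)
      (Tuple.sort (regionRank J1 J2 J3)) := by
  set σ := Tuple.sort (regionRank J1 J2 J3)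
  have hσ : Monotone (regionRank J1 J2 J3 ∘ σ) := Tuple.monotone_sort _
  have hI := monomial_mem_inf_pow_mIdeal_iff (K := K) (J1 := J1) (J2 := J2) (J3 := J3) a1 a2 a3
  intro u v hu hv t hpre ht
  have hu_tight : σ t ∈ J1 ∧ degIn J1 u = a1 ∨ σ t ∈ J2 ∧ degIn J2 u = a2 ∨
      σ t ∈ J3 ∧ degIn J3 u = a3 := by
    simpa [Fin.exists_fin_succ] using hu.exists_degIn_eq hI (ht.trans_le' (Nat.zero_le _))
  obtain ⟨hv1, hv2, -⟩ : a1 ≤ degIn J1 v ∧ a2 ≤ degIn J2 v ∧ a3 ≤ degIn J3 v := by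
    simpa [Fin.forall_fin_succ] using (hI v).mp hv.1
  suffices ∃ j, t < j ∧ 0 < v (σ j) ∧ (σ t ∈ J1 → σ j ∈ J1) ∧
      (σ t ∈ J2 → σ t ∉ J1 → σ t ∉ J3 → σ j ∈ J2) by
    obtain ⟨j, htj, hvj, h1, h2⟩ := this
    exact ⟨j, htj, hvj,
      monomial_add_single_tsub_single_mem hI hv.1 (mem_of_regionRank_le h13 (hσ htj.le) h1 h2)⟩
  by_cases hc1 : σ t ∈ J1
  · have hle : prefixDegIn σ t J1 u ≤ degIn J1 v := by
      rcases hu_tight with ⟨-, hu1⟩ | ⟨hc2, hu2⟩ | ⟨hc3, -⟩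
      · exact (prefixDegIn_le_degIn u).trans (hu1.trans_le hv1)
      · have hJ12 : ∀ k ≤ t, σ k ∈ J1 → σ k ∈ J2 := fun k hk _ =>
          mem_of_regionRank_le_of_mem_inter (hσ hk) hc1 hc2
        calc prefixDegIn σ t J1 u ≤ prefixDegIn σ t J2 u := prefixDegIn_mono_set hJ12 u
          _ ≤ degIn J2 u := prefixDegIn_le_degIn u
          _ ≤ degIn J1 v := by omega
      · exact absurd (Set.mem_inter hc1 hc3) (h13 ▸ Set.notMem_empty _)
    obtain ⟨j, htj, hj1, hvj⟩ := exists_lt_mem_pos_of_prefixDegIn_le hpre ht hc1 hle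
    exact ⟨j, htj, hvj, fun _ => hj1, fun _ h => absurd hc1 h⟩
  by_cases hc23 : σ t ∈ J2 ∧ σ t ∉ J3
  · have hu2 : degIn J2 u = a2 := by
      rcases hu_tight with ⟨h, -⟩ | ⟨-, h⟩ | ⟨h, -⟩
      exacts [absurd h hc1, h, absurd h hc23.2]
    obtain ⟨j, htj, hj2, hvj⟩ := exists_lt_mem_pos_of_prefixDegIn_le hpre ht hc23.1
      ((prefixDegIn_le_degIn u).trans (hu2.trans_le hv2))
    exact ⟨j, htj, hvj, fun h => absurd h hc1, fun _ _ _ => hj2⟩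
  · obtain ⟨j, htj, hvj⟩ := hu.exists_lt_pos hv.1 σ hpre ht
    exact ⟨j, htj, hvj, fun h => absurd h hc1, fun h2 _ h3 => absurd ⟨h2, h3⟩ hc23⟩

end ThreeIdeals

theorem stmt7_general (K : Type*) [Field K] {n : ℕ} (J1 J2 J3 : Set (Fin n))
    (h13 : J1 ∩ J3 = ∅) (a1 a2 a3 : ℕ)
    (h21 : a2 ≤ a1) :
    ∃ σ : Equiv.Perm (Fin n),
      WeaklyPolymatroidal ((mIdeal K J1) ^ a1 ⊓ (mIdeal K J2) ^ a2 ⊓ (mIdeal K J3) ^ a3) σ :=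
  ⟨_, weaklyPolymatroidal_inf_pow_mIdeal K h13 h21⟩

theorem stmt7 (K : Type*) [Field K] {n : ℕ} (J1 J2 J3 : Set (Fin n))
    (h13 : J1 ∩ J3 = ∅) (a1 a2 a3 : ℕ)
    (h3 : 0 < a3) (h32 : a3 ≤ a2) (h21 : a2 ≤ a1) :
    ∃ σ : Equiv.Perm (Fin n),
      WeaklyPolymatroidal ((mIdeal K J1) ^ a1 ⊓ (mIdeal K J2) ^ a2 ⊓ (mIdeal K J3) ^ a3) σ :=
  stmt7_general K J1 J2 J3 h13 a1 a2 a3 h21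
end

section
/- Let I = (x_1,x_2)^2 ∩ (x_2,x_3)^2 ∩ (x_3,x_4)^2 ∩ (x_4,x_5) in K[x_1,...,x_5]. Then I does not satisfy the non-pure dual exchange property: for u = x_1x_2x_3x_4 and v = x_2^2x_4^2 in G(I), deg_{x_1}(v) < deg_{x_1}(u), but x_1x_2^2x_4 ∉ I and x_1x_2x_4^2 ∉ I. -/
open MvPolynomial

/-!
A monomial lies in `(x_i : i ∈ J)^k` exactly when at least `k` of its factors are variables
indexed by `J`. Hence `x^m ∈ I` is the system of linear inequalities
`m₀ + m₁ ≥ 2, m₁ + m₂ ≥ 2, m₂ + m₃ ≥ 2, m₃ + m₄ ≥ 1`, and minimality of `u`, `v` and the failure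
of both possible exchanges `x₀ v / x_j` (`j = 1, 3`) are finite arithmetic checks.
-/

section MonomialMemSpanXPow

variable {σ R : Type*} [CommSemiring R] {J : Set σ}

lemma aeval_X_pow_monomial_one (w : σ → ℕ) (m : σ →₀ ℕ) :
    aeval (fun i => (Polynomial.X : Polynomial R) ^ w i) (monomial m (1 : R)) =
      Polynomial.X ^ m.weight w := by
  simp only [aeval_monomial, map_one, one_mul, Finsupp.prod, ← pow_mul,
    Finset.prod_pow_eq_pow_sum, Finsupp.weight_apply, Finsupp.sum, smul_eq_mul, mul_comm]

lemma le_weight_of_monomial_mem_span_X_pow [Nontrivial R] {k : ℕ} {m : σ →₀ ℕ}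
    (h : monomial m (1 : R) ∈ Ideal.span (X '' J) ^ k) : k ≤ m.weight (J.indicator 1 : σ → ℕ) := by
  -- `x_i ↦ t` for `i ∈ J`, `x_i ↦ 1` otherwise maps the ideal into `(t)` and `m` to `t ^ weight`.
  set φ := aeval (R := R) fun i => (Polynomial.X : Polynomial R) ^ J.indicator 1 i
  have hspan : (Ideal.span (X '' J)).map φ ≤ Ideal.span {Polynomial.X} := by
    rw [Ideal.map_span, Ideal.span_le]
    rintro _ ⟨_, ⟨i, hi, rfl⟩, rfl⟩
    simp [φ, hi]
  have hmap : φ (monomial m 1) ∈ Ideal.span {Polynomial.X ^ k} := by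
    rw [← Ideal.span_singleton_pow]
    exact Ideal.pow_right_mono hspan k (Ideal.map_pow φ _ k ▸ Ideal.mem_map_of_mem φ h)
  rw [aeval_X_pow_monomial_one, Ideal.mem_span_singleton, Polynomial.X_pow_dvd_iff] at hmap
  by_contra! hlt
  simpa using hmap _ hlt

lemma monomial_mem_span_X_pow_of_le_weight {k : ℕ} {m : σ →₀ ℕ}
    (h : k ≤ m.weight (J.indicator 1 : σ → ℕ)) : monomial m (1 : R) ∈ Ideal.span (X '' J) ^ k := by
  induction k generalizing m with
  | zero => simp
  | succ k ih =>
    obtain ⟨i, hiJ, hi⟩ : ∃ i ∈ J, m i ≠ 0 := by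
      by_contra! h0
      have : m.weight (J.indicator 1 : σ → ℕ) = 0 := by
        rw [Finsupp.weight_apply, Finsupp.sum]
        refine Finset.sum_eq_zero fun i _ => ?_
        by_cases hi : i ∈ J <;> simp [hi, h0]
      omega
    have hweight := Finsupp.weight_sub_single_add (w := (J.indicator 1 : σ → ℕ)) hi
    rw [Set.indicator_of_mem hiJ, Pi.one_apply] at hweight
    rw [← Finsupp.sub_add_single_one_cancel hi, ← mul_one (1 : R), ← monomial_mul, pow_succ]
    exact Ideal.mul_mem_mul (ih (by omega)) (Ideal.subset_span ⟨i, hiJ, rfl⟩)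

lemma monomial_mem_span_X_pow_iff [Nontrivial R] {k : ℕ} {m : σ →₀ ℕ} :
    monomial m (1 : R) ∈ Ideal.span (X '' J) ^ k ↔ k ≤ m.weight (J.indicator 1 : σ → ℕ) :=
  ⟨le_weight_of_monomial_mem_span_X_pow, monomial_mem_span_X_pow_of_le_weight⟩

lemma weight_indicator_pair [DecidableEq σ] {a b : σ} (hab : a ≠ b) (m : σ →₀ ℕ) :
    m.weight (({a, b} : Set σ).indicator 1) = m a + m b := by
  have : ({a, b} : Set σ).indicator (1 : σ → ℕ) = Pi.single a 1 + Pi.single b 1 := by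
    ext i
    by_cases ha : i = a <;> by_cases hb : i = b <;> simp [Set.indicator, ha, hb, hab]
  rw [this, Finsupp.weight_apply]
  simp only [Pi.add_apply, smul_add, Finsupp.sum_add, ← Finsupp.weight_apply,
    Finsupp.weight_single_one_apply]

end MonomialMemSpanXPow

lemma minGen_of_forall_le {n : ℕ} {K : Type*} [Field K] {I : Ideal (MvPolynomial (Fin n) K)}
    {m : Fin n →₀ ℕ} (hm : monomial m (1 : K) ∈ I)
    (h : ∀ m' ≤ m, monomial m' (1 : K) ∈ I → m ≤ m') : MinGen I m :=
  ⟨hm, fun m' hle hne hmem => hne (le_antisymm hle (h m' hle hmem))⟩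

namespace NPDECounterexample

open Finsupp (single)

variable (K : Type*) [Field K]

noncomputable def ideal : Ideal (MvPolynomial (Fin 5) K) :=
  (mIdeal K {0, 1}) ^ 2 ⊓ (mIdeal K {1, 2}) ^ 2 ⊓ (mIdeal K {2, 3}) ^ 2 ⊓ mIdeal K {3, 4}

noncomputable def u : Fin 5 →₀ ℕ := single 0 1 + single 1 1 + single 2 1 + single 3 1

noncomputable def v : Fin 5 →₀ ℕ := single 1 2 + single 3 2

variable {K}

lemma monomial_mem_ideal_iff (m : Fin 5 →₀ ℕ) :
    monomial m (1 : K) ∈ ideal K ↔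
      2 ≤ m 0 + m 1 ∧ 2 ≤ m 1 + m 2 ∧ 2 ≤ m 2 + m 3 ∧ 1 ≤ m 3 + m 4 := by
  rw [ideal, ← pow_one (mIdeal K {3, 4})]
  simp only [Submodule.mem_inf, mIdeal, monomial_mem_span_X_pow_iff, and_assoc]
  simp [weight_indicator_pair]

lemma minGen_u : MinGen (ideal K) u := by
  refine minGen_of_forall_le ((monomial_mem_ideal_iff _).2 (by simp [u])) fun m hle hm i => ?_
  rw [monomial_mem_ideal_iff] at hm
  have h0 := hle 0; have h1 := hle 1; have h2 := hle 2; have h3 := hle 3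
  simp [u] at h0 h1 h2 h3
  fin_cases i <;> simp [u] <;> omega

lemma minGen_v : MinGen (ideal K) v := by
  refine minGen_of_forall_le ((monomial_mem_ideal_iff _).2 (by simp [v])) fun m hle hm i => ?_
  rw [monomial_mem_ideal_iff] at hm
  have h0 := hle 0; have h2 := hle 2; have h4 := hle 4
  simp [v] at h0 h2 h4
  fin_cases i <;> simp [v] <;> omega

lemma expDeg_u_le_expDeg_v : expDeg u ≤ expDeg v := by
  simp [expDeg, u, v, Finsupp.sum_fintype, Fin.sum_univ_five]

lemma exchange_not_mem {j : Fin 5} (hj : u j < v j) :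
    monomial (v + single 0 1 - single j 1) (1 : K) ∉ ideal K := by
  rw [monomial_mem_ideal_iff]
  fin_cases j <;> simp [u, v] at hj ⊢

lemma not_npde : ¬ NPDE (ideal K) := fun h =>
  have ⟨_, hj, hmem⟩ := h u v minGen_u minGen_v expDeg_u_le_expDeg_v 0 (by simp [u, v])
  exchange_not_mem hj hmem

lemma X_mul_X_sq_mul_X_eq :
    (X 0 * X 1 ^ 2 * X 3 : MvPolynomial (Fin 5) K) = monomial (v + single 0 1 - single 3 1) 1 := by
  simp only [X, monomial_pow, monomial_mul, one_pow, mul_one]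
  refine congrArg (monomial · 1) (Finsupp.ext fun i => ?_)
  fin_cases i <;> simp [v]

lemma X_mul_X_mul_X_sq_eq :
    (X 0 * X 1 * X 3 ^ 2 : MvPolynomial (Fin 5) K) = monomial (v + single 0 1 - single 1 1) 1 := by
  simp only [X, monomial_pow, monomial_mul, one_pow, mul_one]
  refine congrArg (monomial · 1) (Finsupp.ext fun i => ?_)
  fin_cases i <;> simp [v]

end NPDECounterexample

theorem stmt12 (K : Type*) [Field K] :
    let I : Ideal (MvPolynomial (Fin 5) K) :=
      (mIdeal K {0, 1}) ^ 2 ⊓ (mIdeal K {1, 2}) ^ 2 ⊓ (mIdeal K {2, 3}) ^ 2 ⊓ mIdeal K {3, 4}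
    let u : Fin 5 →₀ ℕ :=
      Finsupp.single 0 1 + Finsupp.single 1 1 + Finsupp.single 2 1 + Finsupp.single 3 1
    let v : Fin 5 →₀ ℕ := Finsupp.single 1 2 + Finsupp.single 3 2
    ¬ NPDE I ∧ MinGen I u ∧ MinGen I v ∧ v 0 < u 0 ∧
    (X 0 * X 1 ^ 2 * X 3 : MvPolynomial (Fin 5) K) ∉ I ∧
    (X 0 * X 1 * X 3 ^ 2 : MvPolynomial (Fin 5) K) ∉ I := by
  intro I u v
  refine ⟨NPDECounterexample.not_npde, NPDECounterexample.minGen_u,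
    NPDECounterexample.minGen_v, by simp [u, v], ?_, ?_⟩
  · rw [NPDECounterexample.X_mul_X_sq_mul_X_eq]
    exact NPDECounterexample.exchange_not_mem (by simp [NPDECounterexample.u, NPDECounterexample.v])
  · rw [NPDECounterexample.X_mul_X_mul_X_sq_eq]
    exact NPDECounterexample.exchange_not_mem (by simp [NPDECounterexample.u, NPDECounterexample.v])
end

section
/- Let I be a monomial ideal with the non-pure dual exchange property in S = K[x_1,...,x_n], let d be the minimal degree of a minimal generator of I, and suppose x_1 divides some minimal generator of I of degree d. Write I = x_1 I_1 + I_2 where G(I_2) consists of the minimal generators of I not divisible by x_1. Then I_2 ⊆ I_1, and both x_1 I_1 and I_2 satisfy the non-pure dual exchange property. -/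
open MvPolynomial

/-!
A sub-ideal generated by a subset `A` of `G(I)` has `G = A`, so its dual exchange property
only asks that the exchanged monomial `v x_i / x_j ∈ I` be a multiple of some element of `A`.
For `A = {u : x_1 ∤ u}` this is automatic, since `x_1` occurs neither in `u` nor in `v`.
The key point for `A = {u : x_1 ∣ u}` and for `I_2 ⊆ I_1` is that every `w ∈ G(I)` with
`x_1 ∤ w` is divisible by `u / x_1` for some `u ∈ G(I)` with `x_1 ∣ u`: exchange `x_1` from a
least-degree generator divisible by `x_1` into `w`.
-/

section MonomialIdeals

variable {σ : Type*} {K : Type*} [Field K]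

theorem monomial_mem_span_monomial_image_iff {A : Set (σ →₀ ℕ)} {m : σ →₀ ℕ} :
    monomial m (1 : K) ∈ Ideal.span ((fun a => monomial a (1 : K)) '' A) ↔ ∃ a ∈ A, a ≤ m := by
  classical
  rw [mem_ideal_span_monomial_image, support_monomial, if_neg one_ne_zero]
  simp

theorem span_monomial_mul_span_monomial_image (s : σ →₀ ℕ) (A : Set (σ →₀ ℕ)) :
    Ideal.span {monomial s (1 : K)} * Ideal.span ((fun a => monomial a (1 : K)) '' A) =
      Ideal.span ((fun a => monomial a (1 : K)) '' ((s + ·) '' A)) := by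
  rw [Ideal.span_mul_span', Set.singleton_mul, Set.image_image, Set.image_image]
  simp only [monomial_mul, one_mul]

theorem span_X_mul_span_monomial_tsub_single (P : (σ →₀ ℕ) → Prop) (i : σ) :
    Ideal.span {(X i : MvPolynomial σ K)} *
        Ideal.span ((fun m => monomial m (1 : K)) ''
          {m | ∃ u, P u ∧ 0 < u i ∧ m = u - Finsupp.single i 1}) =
      Ideal.span ((fun m => monomial m (1 : K)) '' {u | P u ∧ 0 < u i}) := by
  rw [X, span_monomial_mul_span_monomial_image]
  congr 3
  ext u
  constructor
  · rintro ⟨_, ⟨v, hv, hvi, rfl⟩, rfl⟩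
    simp only [Set.mem_ofPred_eq,
      add_tsub_cancel_of_le (Finsupp.single_le_iff.2 hvi : Finsupp.single i 1 ≤ v)]
    exact ⟨hv, hvi⟩
  · rintro ⟨hu, hui⟩
    exact ⟨_, ⟨u, hu, hui, rfl⟩,
      add_tsub_cancel_of_le (Finsupp.single_le_iff.2 hui : Finsupp.single i 1 ≤ u)⟩

end MonomialIdeals

section MinimalGenerators

variable {n : ℕ} {K : Type*} [Field K] {I : Ideal (MvPolynomial (Fin n) K)}

theorem exists_minGen_le {m : Fin n →₀ ℕ} (hm : monomial m (1 : K) ∈ I) :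
    ∃ w, MinGen I w ∧ w ≤ m := by
  obtain ⟨w, ⟨hwm, hw⟩, hmin⟩ :=
    wellFounded_lt.has_min {w | w ≤ m ∧ monomial w (1 : K) ∈ I} ⟨m, le_rfl, hm⟩
  exact ⟨w, ⟨hw, fun w' hle hne hw' =>
    hmin w' ⟨hle.trans hwm, hw'⟩ (lt_of_le_of_ne hle hne)⟩, hwm⟩

theorem mem_of_minGen_span_monomial_image {A : Set (Fin n →₀ ℕ)} {m : Fin n →₀ ℕ}
    (hm : MinGen (Ideal.span ((fun a => monomial a (1 : K)) '' A)) m) : m ∈ A := by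
  obtain ⟨a, ha, ham⟩ := monomial_mem_span_monomial_image_iff.1 hm.1
  obtain rfl : a = m := by
    by_contra hne
    exact hm.2 a ham hne (monomial_mem_span_monomial_image_iff.2 ⟨a, ha, le_rfl⟩)
  exact ha

theorem npde_span_monomial_image {A : Set (Fin n →₀ ℕ)}
    (hA : ∀ u ∈ A, ∀ v ∈ A, expDeg u ≤ expDeg v → ∀ i, v i < u i →
      ∃ j, u j < v j ∧ monomial (v + Finsupp.single i 1 - Finsupp.single j 1) (1 : K) ∈
        Ideal.span ((fun a => monomial a (1 : K)) '' A)) :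
    NPDE (Ideal.span ((fun a => monomial a (1 : K)) '' A)) :=
  fun u v hu hv => hA u (mem_of_minGen_span_monomial_image hu) v
    (mem_of_minGen_span_monomial_image hv)

end MinimalGenerators

section DualExchange

variable {n : ℕ} {K : Type*} [Field K] {I : Ideal (MvPolynomial (Fin n) K)}

theorem exchange_apply (v : Fin n →₀ ℕ) (i j k : Fin n) :
    (v + Finsupp.single i 1 - Finsupp.single j 1 : Fin n →₀ ℕ) k =
      v k + (if i = k then 1 else 0) - (if j = k then 1 else 0) := by
  simp only [Finsupp.tsub_apply, Finsupp.add_apply, Finsupp.single_apply]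

theorem NPDE.exists_minGen_pos_le_add_single (h : NPDE I) {d : ℕ}
    (hmin : ∀ m, MinGen I m → d ≤ expDeg m) {i : Fin n}
    (hx : ∃ m, MinGen I m ∧ expDeg m = d ∧ 0 < m i) {w : Fin n →₀ ℕ} (hw : MinGen I w)
    (hwi : w i = 0) : ∃ u, MinGen I u ∧ 0 < u i ∧ u ≤ w + Finsupp.single i 1 := by
  obtain ⟨u, hu, rfl, hui⟩ := hx
  obtain ⟨j, hj, hmem⟩ := h u w hu hw (hmin w hw) i (hwi ▸ hui)
  have hji : j ≠ i := by rintro rfl; omega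
  obtain ⟨z, hz, hzle⟩ := exists_minGen_le hmem
  refine ⟨z, hz, Nat.pos_of_ne_zero fun hzi => hw.2 z ?_ ?_ hz.1, hzle.trans tsub_le_self⟩
  · refine Finsupp.le_def.2 fun k => ?_
    have hk := Finsupp.le_def.1 hzle k
    rw [exchange_apply] at hk
    split_ifs at hk <;> subst_vars <;> omega
  · intro hzw
    have hk := Finsupp.le_def.1 hzle j
    rw [exchange_apply, if_neg hji.symm, if_pos rfl, hzw] at hk
    omega

theorem NPDE.span_minGen_eq_zero (h : NPDE I) (i : Fin n) :
    NPDE (Ideal.span ((fun m => monomial m (1 : K)) '' {m | MinGen I m ∧ m i = 0})) := by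
  refine npde_span_monomial_image fun u ⟨hu, hui⟩ v ⟨hv, hvi⟩ hdeg k hk => ?_
  obtain ⟨j, hj, hmem⟩ := h u v hu hv hdeg k hk
  refine ⟨j, hj, ?_⟩
  obtain ⟨w, hw, hwle⟩ := exists_minGen_le hmem
  have hwi : w i = 0 := by
    have hle := Finsupp.le_def.1 hwle i
    rw [exchange_apply] at hle
    split_ifs at hle <;> subst_vars <;> omega
  exact monomial_mem_span_monomial_image_iff.2 ⟨w, ⟨hw, hwi⟩, hwle⟩

theorem NPDE.span_minGen_pos (h : NPDE I) {d : ℕ}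
    (hmin : ∀ m, MinGen I m → d ≤ expDeg m) {i : Fin n}
    (hx : ∃ m, MinGen I m ∧ expDeg m = d ∧ 0 < m i) :
    NPDE (Ideal.span ((fun m => monomial m (1 : K)) '' {m | MinGen I m ∧ 0 < m i})) := by
  refine npde_span_monomial_image fun u ⟨hu, _⟩ v ⟨hv, hvi⟩ hdeg k hk => ?_
  obtain ⟨j, hj, hmem⟩ := h u v hu hv hdeg k hk
  refine ⟨j, hj, monomial_mem_span_monomial_image_iff.2 ?_⟩
  obtain ⟨w, hw, hwle⟩ := exists_minGen_le hmem
  have hle := Finsupp.le_def.1 hwle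
  have hexi : 0 < (v + Finsupp.single k 1 - Finsupp.single j 1 : Fin n →₀ ℕ) i := by
    rw [exchange_apply]
    split_ifs <;> subst_vars <;> omega
  rcases Nat.eq_zero_or_pos (w i) with hwi | hwi
  · obtain ⟨u', hu', hu'i, hu'le⟩ := h.exists_minGen_pos_le_add_single hmin hx hw hwi
    refine ⟨u', ⟨hu', hu'i⟩, hu'le.trans (Finsupp.le_def.2 fun k' => ?_)⟩
    rw [Finsupp.add_apply, Finsupp.single_apply]
    split_ifs with hik'
    · subst hik'; omega
    · simpa using hle k'
  · exact ⟨w, ⟨hw, hwi⟩, hwle⟩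

end DualExchange

theorem stmt15_general (K : Type*) [Field K] {n : ℕ} [NeZero n]
    (I : Ideal (MvPolynomial (Fin n) K)) (h : NPDE I)
    (d : ℕ) (hmin : ∀ m, MinGen I m → d ≤ expDeg m)
    (hx1 : ∃ m, MinGen I m ∧ expDeg m = d ∧ 0 < m 0) :
    let I1 : Ideal (MvPolynomial (Fin n) K) :=
      Ideal.span ((fun m : Fin n →₀ ℕ => monomial m (1 : K)) ''
        {m | ∃ u, MinGen I u ∧ 0 < u 0 ∧ m = u - Finsupp.single 0 1})
    let I2 : Ideal (MvPolynomial (Fin n) K) :=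
      Ideal.span ((fun m : Fin n →₀ ℕ => monomial m (1 : K)) '' {m | MinGen I m ∧ m 0 = 0})
    I2 ≤ I1 ∧ NPDE (Ideal.span {(X 0 : MvPolynomial (Fin n) K)} * I1) ∧ NPDE I2 := by
  intro I1 I2
  refine ⟨?_, ?_, h.span_minGen_eq_zero 0⟩
  · refine Ideal.span_le.2 ?_
    rintro _ ⟨w, ⟨hw, hw0⟩, rfl⟩
    obtain ⟨u, hu, hu0, hule⟩ := h.exists_minGen_pos_le_add_single hmin hx1 hw hw0
    exact monomial_mem_span_monomial_image_iff.2 ⟨_, ⟨u, hu, hu0, rfl⟩, tsub_le_iff_right.2 hule⟩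
  · rw [span_X_mul_span_monomial_tsub_single]
    exact h.span_minGen_pos hmin hx1

theorem stmt15 (K : Type*) [Field K] {n : ℕ} [NeZero n]
    (I : Ideal (MvPolynomial (Fin n) K)) (hmon : IsMonomialIdeal I) (h : NPDE I)
    (d : ℕ) (hmin : ∀ m, MinGen I m → d ≤ expDeg m)
    (hx1 : ∃ m, MinGen I m ∧ expDeg m = d ∧ 0 < m 0) :
    let I1 : Ideal (MvPolynomial (Fin n) K) :=
      Ideal.span ((fun m : Fin n →₀ ℕ => monomial m (1 : K)) ''
        {m | ∃ u, MinGen I u ∧ 0 < u 0 ∧ m = u - Finsupp.single 0 1})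
    let I2 : Ideal (MvPolynomial (Fin n) K) :=
      Ideal.span ((fun m : Fin n →₀ ℕ => monomial m (1 : K)) '' {m | MinGen I m ∧ m 0 = 0})
    I2 ≤ I1 ∧ NPDE (Ideal.span {(X 0 : MvPolynomial (Fin n) K)} * I1) ∧ NPDE I2 :=
  stmt15_general K I h d hmin hx1
end
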